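/- arXiv:2604.11601 — 11 statements merged into one kernel-verified Lean document; each statement's English description precedes it below -/
import Mathlib

section
/- Theorem 2 (first part, strict inequality): if N ≥ 2 and the squared amplitudes are not all equal (there exist i, j with (u i)² ≠ (u j)²), then for any two distinct positions w ≠ w' we have E[X_w² · X_{w'}²] < m₂². -/
/-- Expectation of a real-valued random variable on the finite probability space
`Equiv.Perm (Fin N)` equipped with the uniform probability measure. -/
noncomputable def permExpect (N : ℕ) (f : Equiv.Perm (Fin N) → ℝ) : ℝ :=
  (∑ σ : Equiv.Perm (Fin N), f σ) / (Fintype.card (Equiv.Perm (Fin N)) : ℝ)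

/-- Empirical `k`-th moment of the amplitude block `u`. -/
noncomputable def empMoment (N : ℕ) (u : Fin N → ℝ) (k : ℕ) : ℝ :=
  (1 / (N : ℝ)) * ∑ i : Fin N, (u i) ^ k

/-!
Right multiplication by a transposition preserves the uniform measure, so `E[g (σ v)]` does not
depend on `v` and `E[g (σ v) * g (σ v')]` does not depend on the pair `v ≠ v'`. Summing over
`v`, resp. over `v'` with `v` fixed, gives `N * E[g (σ v)] = ∑ g` and
`N (N - 1) * E[g (σ v) * g (σ v')] = (∑ g)² - ∑ g²`. For `g = u²` the claim thus reduces to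
`(∑ g)² < N * ∑ g²`, which is Cauchy–Schwarz, strict because `g` is not constant.
-/

open Finset

theorem sq_sum_lt_card_mul_sum_sq {ι : Type*} [Fintype ι] (f : ι → ℝ)
    (h : ∃ i j, f i ≠ f j) :
    (∑ i, f i) ^ 2 < Fintype.card ι * ∑ i, f i ^ 2 := by
  have lagrange : ∑ i, ∑ j, (f i - f j) ^ 2 =
      2 * (Fintype.card ι * ∑ i, f i ^ 2 - (∑ i, f i) ^ 2) := by
    simp only [sub_sq, sum_add_distrib, sum_sub_distrib, sum_const, card_univ, nsmul_eq_mul,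
      ← mul_sum, ← sum_mul]
    ring
  obtain ⟨i, j, hij⟩ := h
  have : 0 < ∑ i, ∑ j, (f i - f j) ^ 2 :=
    sum_pos' (fun _ _ => sum_nonneg fun _ _ => sq_nonneg _)
      ⟨i, mem_univ _, sum_pos' (fun _ _ => sq_nonneg _)
        ⟨j, mem_univ _, by have := sub_ne_zero.mpr hij; positivity⟩⟩
  linarith

namespace permExpect

variable {N : ℕ}

theorem sum {ι : Type*} (s : Finset ι) (f : ι → Equiv.Perm (Fin N) → ℝ) :
    permExpect N (fun σ => ∑ i ∈ s, f i σ) = ∑ i ∈ s, permExpect N (f i) := by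
  simp only [permExpect, Finset.sum_comm (s := s), Finset.sum_div]

theorem mul_left (c : ℝ) (f : Equiv.Perm (Fin N) → ℝ) :
    permExpect N (fun σ => c * f σ) = c * permExpect N f := by
  simp only [permExpect, ← mul_sum, mul_div_assoc]

theorem const (c : ℝ) : permExpect N (fun _ => c) = c := by
  simp [permExpect]

theorem comp_mul_right (τ : Equiv.Perm (Fin N)) (f : Equiv.Perm (Fin N) → ℝ) :
    permExpect N (fun σ => f (σ * τ)) = permExpect N f :=
  congrArg (· / _) (Equiv.sum_comp (Equiv.mulRight τ) f)

theorem apply_eq_sum_div (g : Fin N → ℝ) (v : Fin N) :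
    permExpect N (fun σ => g (σ v)) = (∑ i, g i) / N := by
  have invariant (x : Fin N) :
      permExpect N (fun σ => g (σ x)) = permExpect N (fun σ => g (σ v)) := by
    simpa using (comp_mul_right (Equiv.swap x v) (fun σ => g (σ x))).symm
  have total : ∑ x, permExpect N (fun σ => g (σ x)) = ∑ i, g i := by
    rw [← sum]
    simp_rw [Equiv.sum_comp]
    exact const _
  simp only [invariant, sum_const, card_univ, Fintype.card_fin, nsmul_eq_mul] at total
  have : (N : ℝ) ≠ 0 := Nat.cast_ne_zero.mpr v.pos.ne'
  rw [← total]
  field_simp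

theorem apply_mul_apply (g : Fin N → ℝ) {v v' : Fin N} (h : v ≠ v') :
    permExpect N (fun σ => g (σ v) * g (σ v')) =
      ((∑ i, g i) ^ 2 - ∑ i, g i ^ 2) / (N * (N - 1)) := by
  set P := permExpect N (fun σ => g (σ v) * g (σ v'))
  have invariant (x : Fin N) (hx : x ≠ v) : permExpect N (fun σ => g (σ v) * g (σ x)) = P := by
    simpa [Equiv.swap_apply_of_ne_of_ne hx.symm h] using
      (comp_mul_right (Equiv.swap x v') (fun σ => g (σ v) * g (σ x))).symm
  have total : ∑ x, permExpect N (fun σ => g (σ v) * g (σ x)) = (∑ i, g i) ^ 2 / N := by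
    rw [← sum]
    simp_rw [← mul_sum, Equiv.sum_comp, mul_comm _ (∑ i, g i), mul_left, apply_eq_sum_div]
    ring
  have diagonal : permExpect N (fun σ => g (σ v) * g (σ v)) = (∑ i, g i ^ 2) / N := by
    simp_rw [← sq]
    exact apply_eq_sum_div (fun i => g i ^ 2) v
  rw [← add_sum_erase _ _ (mem_univ v),
    sum_congr rfl fun x hx => invariant x (ne_of_mem_erase hx), sum_const,
    card_erase_of_mem (mem_univ v), card_univ, Fintype.card_fin, nsmul_eq_mul,
    diagonal] at total
  have hN : (2 : ℝ) ≤ N := by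
    exact_mod_cast Fin.nontrivial_iff_two_le.mp (nontrivial_of_ne v v' h)
  rw [Nat.cast_pred v.pos] at total
  rw [eq_div_iff (by nlinarith)]
  field_simp at total
  linear_combination total

end permExpect

theorem corr_second_second_lt_general (N : ℕ) (u : Fin N → ℝ)
    (hne : ∃ i j : Fin N, (u i) ^ 2 ≠ (u j) ^ 2)
    (w w' : Fin N) (hww' : w ≠ w') :
    permExpect N (fun σ => (u (σ w)) ^ 2 * (u (σ w')) ^ 2)
      < (empMoment N u 2) ^ 2 := by
  have hN : (2 : ℝ) ≤ N := by
    exact_mod_cast Fin.nontrivial_iff_two_le.mp (nontrivial_of_ne w w' hww')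
  have cauchy_schwarz := sq_sum_lt_card_mul_sum_sq (fun i => u i ^ 2) hne
  rw [Fintype.card_fin] at cauchy_schwarz
  rw [permExpect.apply_mul_apply (fun i => u i ^ 2) hww', empMoment, div_lt_iff₀ (by nlinarith)]
  set S := ∑ i, u i ^ 2
  set Q := ∑ i, (u i ^ 2) ^ 2
  calc S ^ 2 - Q < S ^ 2 - S ^ 2 / N := by
        gcongr
        rwa [div_lt_iff₀ (by positivity), mul_comm]
    _ = (1 / N * S) ^ 2 * (N * (N - 1)) := by field_simp

/-- Theorem 2, first part (strict inequality): if the squared amplitudes are not all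
equal, then for distinct positions `w ≠ w'`, `E[X_w² · X_{w'}²] < m₂²`. -/
theorem corr_second_second_lt (N : ℕ) (hN : 2 ≤ N) (u : Fin N → ℝ)
    (hne : ∃ i j : Fin N, (u i) ^ 2 ≠ (u j) ^ 2)
    (w w' : Fin N) (hww' : w ≠ w') :
    permExpect N (fun σ => (u (σ w)) ^ 2 * (u (σ w')) ^ 2)
      < (empMoment N u 2) ^ 2 :=
  corr_second_second_lt_general N u hne w w' hww'
end

section
/- Theorem 2 (second part, equality): for N ≥ 2 and any two distinct positions w ≠ w' in Fin N, the correlation between the second- and fourth-order moments satisfies E[X_w² · X_{w'}⁴] = (N·m₂·m₄ − m₆)/(N − 1). -/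
/-!
For distinct positions `w ≠ w'` the pair `(σ w, σ w')` is uniformly distributed on the
`N (N - 1)` ordered pairs of distinct values: composing `σ` on the right with a permutation
carrying `(w, w')` to another distinct pair `(a, b)` is a bijection of `Perm (Fin N)`. Summing
over all such `(a, b)` and exchanging the sums gives
`N (N - 1) · ∑ σ, f (σ w) (σ w') = N! · ∑_{i ≠ j} f i j`. For `f i j = u i ^ 2 * u j ^ 4` the
off-diagonal sum is `(∑ u²)(∑ u⁴) - ∑ u⁶`.
-/

open Finset Equiv

theorem Finset.sum_offDiag_mul {α R : Type*} [DecidableEq α] [NonUnitalNonAssocRing R]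
    (s : Finset α) (g h : α → R) :
    ∑ p ∈ s.offDiag, g p.1 * h p.2 = (∑ i ∈ s, g i) * (∑ i ∈ s, h i) - ∑ i ∈ s, g i * h i := by
  rw [sum_mul_sum, ← sum_product', ← diag_union_offDiag, sum_union (disjoint_diag_offDiag s),
    sum_diag, add_sub_cancel_left]

theorem Equiv.Perm.exists_apply_eq_and_apply_eq {α : Type*} {a b c d : α}
    (hab : a ≠ b) (hcd : c ≠ d) : ∃ π : Perm α, π a = c ∧ π b = d :=
  MulAction.is_two_pretransitive_iff.mp (Perm.isMultiplyPretransitive α 2) hab hcd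

section PermPair

variable {α M : Type*} [Fintype α] [AddCommMonoid M]

theorem sum_offDiag_perm_apply (σ : Perm α) (f : α → α → M) :
    ∑ p ∈ univ.offDiag, f (σ p.1) (σ p.2) = ∑ p ∈ univ.offDiag, f p.1 p.2 :=
  sum_equiv (σ.prodCongr σ) (by simp) fun _ _ => rfl

variable [DecidableEq α]

theorem sum_perm_apply_pair_eq (f : α → α → M) {a b w w' : α} (hab : a ≠ b) (hw : w ≠ w') :
    ∑ σ : Perm α, f (σ a) (σ b) = ∑ σ : Perm α, f (σ w) (σ w') := by
  obtain ⟨π, rfl, rfl⟩ := Perm.exists_apply_eq_and_apply_eq hw hab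
  exact Fintype.sum_equiv (Equiv.mulRight π) _ _ fun _ => rfl

theorem card_offDiag_nsmul_sum_perm_apply_pair (f : α → α → M) {w w' : α} (hw : w ≠ w') :
    #(univ : Finset α).offDiag • ∑ σ : Perm α, f (σ w) (σ w')
      = Fintype.card (Perm α) • ∑ p ∈ univ.offDiag, f p.1 p.2 := by
  calc #(univ : Finset α).offDiag • ∑ σ : Perm α, f (σ w) (σ w')
      = ∑ p ∈ univ.offDiag, ∑ σ : Perm α, f (σ p.1) (σ p.2) := by
        rw [← sum_const]
        exact sum_congr rfl fun p hp => (sum_perm_apply_pair_eq f (mem_offDiag.mp hp).2.2 hw).symm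
    _ = ∑ σ : Perm α, ∑ p ∈ univ.offDiag, f p.1 p.2 := by
        rw [sum_comm]
        exact sum_congr rfl fun σ _ => sum_offDiag_perm_apply σ f
    _ = Fintype.card (Perm α) • ∑ p ∈ univ.offDiag, f p.1 p.2 := by
        rw [sum_const, card_univ]

theorem sum_perm_apply_pair_div_card {K : Type*} [Field K] [CharZero K] (f : α → α → K)
    {w w' : α} (hw : w ≠ w') :
    (∑ σ : Perm α, f (σ w) (σ w')) / Fintype.card (Perm α)
      = (∑ p ∈ univ.offDiag, f p.1 p.2) / #(univ : Finset α).offDiag := by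
  have hoff : (#(univ : Finset α).offDiag : K) ≠ 0 :=
    Nat.cast_ne_zero.mpr <| card_ne_zero_of_mem (a := (w, w')) <|
      mem_offDiag.mpr ⟨mem_univ w, mem_univ w', hw⟩
  rw [div_eq_div_iff (Nat.cast_ne_zero.mpr Fintype.card_ne_zero) hoff, mul_comm,
    ← nsmul_eq_mul, card_offDiag_nsmul_sum_perm_apply_pair f hw, nsmul_eq_mul, mul_comm]

end PermPair

theorem corr_second_fourth_general (N : ℕ) (u : Fin N → ℝ)
    (w w' : Fin N) (hww' : w ≠ w') :
    permExpect N (fun σ => (u (σ w)) ^ 2 * (u (σ w')) ^ 4)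
      = ((N : ℝ) * empMoment N u 2 * empMoment N u 4 - empMoment N u 6) / ((N : ℝ) - 1) := by
  have hN : (1 : ℝ) < N := by
    exact_mod_cast Fintype.card_fin N ▸ Fintype.one_lt_card_iff.mpr ⟨w, w', hww'⟩
  have hcard : (#(univ : Finset (Fin N)).offDiag : ℝ) = N * (N - 1) := by
    rw [offDiag_card, card_univ, Fintype.card_fin, Nat.cast_sub (Nat.le_mul_self N)]
    push_cast
    ring
  rw [permExpect, sum_perm_apply_pair_div_card (fun i j => u i ^ 2 * u j ^ 4) hww',
    sum_offDiag_mul univ (fun i => u i ^ 2) (fun j => u j ^ 4), hcard]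
  simp only [empMoment, ← pow_add]
  field_simp

/-- Theorem 2, second part (equality): for distinct positions `w ≠ w'`,
`E[X_w² · X_{w'}⁴] = (N·m₂·m₄ − m₆)/(N − 1)`. -/
theorem corr_second_fourth (N : ℕ) (hN : 2 ≤ N) (u : Fin N → ℝ)
    (w w' : Fin N) (hww' : w ≠ w') :
    permExpect N (fun σ => (u (σ w)) ^ 2 * (u (σ w')) ^ 4)
      = ((N : ℝ) * empMoment N u 2 * empMoment N u 4 - empMoment N u 6) / ((N : ℝ) - 1) :=
  corr_second_fourth_general N u w w' hww'
end

section
/- Theorem 3 (equality): for N ≥ 3 and any three pairwise distinct positions w, w', w'' in Fin N, the triple correlation of second-order moments satisfies E[X_w² · X_{w'}² · X_{w''}²] = (N²·m₂³ − 3N·m₂·m₄ + 2·m₆)/((N − 1)(N − 2)). -/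
open Finset

theorem MulAction.card_nsmul_sum_smul {G X M : Type*} [Group G] [Fintype G] [MulAction G X]
    [IsPretransitive G X] [Fintype X] [AddCommMonoid M] (f : X → M) (x : X) :
    Fintype.card X • ∑ g : G, f (g • x) = Fintype.card G • ∑ y, f y := by
  have orbit_sum : ∀ y : X, ∑ g : G, f (g • y) = ∑ g : G, f (g • x) := by
    intro y
    obtain ⟨h, rfl⟩ := exists_smul_eq G x y
    simpa only [Equiv.coe_mulRight, mul_smul] using Equiv.sum_comp (Equiv.mulRight h) (f <| · • x)
  calc Fintype.card X • ∑ g : G, f (g • x)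
      = ∑ y : X, ∑ g : G, f (g • y) := by simp only [orbit_sum, sum_const, card_univ]
    _ = ∑ g : G, ∑ y, f (g • y) := sum_comm
    _ = ∑ g : G, ∑ y, f y := sum_congr rfl fun g _ => Equiv.sum_comp (MulAction.toPerm g) f
    _ = Fintype.card G • ∑ y, f y := by rw [sum_const, card_univ]

instance Equiv.Perm.isPretransitive_embedding {β α : Type*} [Finite β] :
    MulAction.IsPretransitive (Equiv.Perm α) (β ↪ α) :=
  ⟨Equiv.Perm.exists_smul_eq_embedding⟩

theorem permExpect_smul_embedding {β : Type*} [Fintype β] {N : ℕ}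
    (ι : β ↪ Fin N) (F : (β ↪ Fin N) → ℝ) :
    permExpect N (fun σ => F (σ • ι)) = (∑ e, F e) / Fintype.card (β ↪ Fin N) := by
  have hX : (Fintype.card (β ↪ Fin N) : ℝ) ≠ 0 := by
    have : Nonempty (β ↪ Fin N) := ⟨ι⟩
    exact_mod_cast Fintype.card_ne_zero
  have hG : (Fintype.card (Equiv.Perm (Fin N)) : ℝ) ≠ 0 := by exact_mod_cast Fintype.card_ne_zero
  have h := MulAction.card_nsmul_sum_smul (G := Equiv.Perm (Fin N)) F ι
  rw [nsmul_eq_mul, nsmul_eq_mul] at h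
  rw [permExpect, div_eq_div_iff hG hX]
  linarith

theorem Matrix.injective_vecCons_three {α : Type*} {a b c : α}
    (hab : a ≠ b) (hac : a ≠ c) (hbc : b ≠ c) : Function.Injective ![a, b, c] := by
  intro i j
  fin_cases i <;> fin_cases j <;> simp [hab, hac, hbc, hab.symm, hac.symm, hbc.symm]

section DistinctTriples

variable {α : Type*} [Fintype α] [DecidableEq α]

theorem sum_embedding_fin_three {M : Type*} [AddCommMonoid M] (g : α → α → α → M) :
    ∑ e : Fin 3 ↪ α, g (e 0) (e 1) (e 2)
      = ∑ a, ∑ b ∈ univ.erase a, ∑ c ∈ (univ.erase a).erase b, g a b c := by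
  simp only [sum_sigma']
  refine sum_bij' (fun e _ => ⟨e 0, e 1, e 2⟩)
    (fun t ht => ⟨![t.1, t.2.1, t.2.2], ?_⟩) ?_ ?_ ?_ ?_ ?_
  · simp only [mem_sigma, mem_univ, mem_erase, true_and, and_true] at ht
    exact Matrix.injective_vecCons_three ht.1.symm ht.2.2.symm ht.2.1.symm
  · intro e _
    simp [e.injective.ne_iff]
  · simp
  · intro e _
    ext i
    fin_cases i <;> rfl
  · intro t _
    rfl
  · simp

theorem sum_distinct_triples_mul {R : Type*} [CommRing R] (f : α → R) :
    ∑ a, ∑ b ∈ univ.erase a, ∑ c ∈ (univ.erase a).erase b, f a * f b * f c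
      = (∑ i, f i) ^ 3 - 3 * (∑ i, f i) * ∑ i, f i ^ 2 + 2 * ∑ i, f i ^ 3 := by
  set p₁ := ∑ i, f i
  set p₂ := ∑ i, f i ^ 2
  have sum_erase_erase : ∀ a, ∀ b ∈ univ.erase a,
      ∑ c ∈ (univ.erase a).erase b, f c = p₁ - f a - f b := fun a b hb => by
    rw [sum_erase_eq_sub hb, sum_erase_eq_sub (mem_univ a)]
  have sum_erase_mul : ∀ a, ∑ b ∈ univ.erase a, f b * (p₁ - f a - f b)
      = (p₁ - f a) ^ 2 - (p₂ - f a ^ 2) := fun a => by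
    calc _ = ∑ b ∈ univ.erase a, (f b * (p₁ - f a) - f b ^ 2) :=
          sum_congr rfl fun b _ => by ring
      _ = _ := by
        rw [sum_sub_distrib, ← sum_mul, sum_erase_eq_sub (mem_univ a),
          sum_erase_eq_sub (f := (f · ^ 2)) (mem_univ a)]
        ring
  calc _ = ∑ a, f a * ∑ b ∈ univ.erase a, f b * ∑ c ∈ (univ.erase a).erase b, f c := by
        simp only [mul_sum, mul_assoc]
    _ = ∑ a, f a * ((p₁ - f a) ^ 2 - (p₂ - f a ^ 2)) := by
        refine sum_congr rfl fun a _ => ?_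
        rw [sum_congr rfl (fun b hb => by rw [sum_erase_erase a b hb]), sum_erase_mul]
    _ = ∑ a, ((p₁ ^ 2 - p₂) * f a - 2 * p₁ * f a ^ 2 + 2 * f a ^ 3) :=
        sum_congr rfl fun a _ => by ring
    _ = _ := by simp only [sum_add_distrib, sum_sub_distrib, ← mul_sum]; ring

end DistinctTriples

theorem corr_triple_second_general (N : ℕ) (u : Fin N → ℝ)
    (w w' w'' : Fin N) (h1 : w ≠ w') (h2 : w ≠ w'') (h3 : w' ≠ w'') :
    permExpect N (fun σ => (u (σ w)) ^ 2 * (u (σ w')) ^ 2 * (u (σ w'')) ^ 2)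
      = ((N : ℝ) ^ 2 * (empMoment N u 2) ^ 3
          - 3 * (N : ℝ) * empMoment N u 2 * empMoment N u 4
          + 2 * empMoment N u 6) / (((N : ℝ) - 1) * ((N : ℝ) - 2)) := by
  let ι : Fin 3 ↪ Fin N := ⟨![w, w', w''], Matrix.injective_vecCons_three h1 h2 h3⟩
  have hN : 3 ≤ N := by simpa using Fintype.card_le_of_embedding ι
  have hN' : (3 : ℝ) ≤ N := by exact_mod_cast hN
  have hcard : (Fintype.card (Fin 3 ↪ Fin N) : ℝ) = N * (N - 1) * (N - 2) := by
    rw [Fintype.card_embedding_eq, Fintype.card_fin, Fintype.card_fin]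
    simp only [Nat.descFactorial_succ, Nat.descFactorial_zero, Nat.sub_zero]
    push_cast [Nat.cast_sub (by omega : 1 ≤ N), Nat.cast_sub (by omega : 2 ≤ N)]
    ring
  have hpow : ∀ k i, (u i ^ 2) ^ k = u i ^ (2 * k) := fun k i => (pow_mul _ _ _).symm
  calc _ = (∑ e : Fin 3 ↪ Fin N, u (e 0) ^ 2 * u (e 1) ^ 2 * u (e 2) ^ 2)
          / Fintype.card (Fin 3 ↪ Fin N) :=
        permExpect_smul_embedding ι fun e => u (e 0) ^ 2 * u (e 1) ^ 2 * u (e 2) ^ 2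
    _ = ((∑ i, u i ^ 2) ^ 3 - 3 * (∑ i, u i ^ 2) * (∑ i, u i ^ 4) + 2 * ∑ i, u i ^ 6)
          / (N * (N - 1) * (N - 2)) := by
        rw [sum_embedding_fin_three fun a b c => u a ^ 2 * u b ^ 2 * u c ^ 2,
          sum_distinct_triples_mul (u · ^ 2), hcard]
        simp only [hpow]
    _ = _ := by
        have : (N : ℝ) - 1 ≠ 0 := by linarith
        have : (N : ℝ) - 2 ≠ 0 := by linarith
        simp only [empMoment]
        field_simp

/-- Theorem 3 (equality): for pairwise distinct positions `w, w', w''`,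
`E[X_w² · X_{w'}² · X_{w''}²] = (N²·m₂³ − 3N·m₂·m₄ + 2·m₆)/((N−1)(N−2))`. -/
theorem corr_triple_second (N : ℕ) (hN : 3 ≤ N) (u : Fin N → ℝ)
    (w w' w'' : Fin N) (h1 : w ≠ w') (h2 : w ≠ w'') (h3 : w' ≠ w'') :
    permExpect N (fun σ => (u (σ w)) ^ 2 * (u (σ w')) ^ 2 * (u (σ w'')) ^ 2)
      = ((N : ℝ) ^ 2 * (empMoment N u 2) ^ 3
          - 3 * (N : ℝ) * empMoment N u 2 * empMoment N u 4
          + 2 * empMoment N u 6) / (((N : ℝ) - 1) * ((N : ℝ) - 2)) :=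
  corr_triple_second_general N u w w' w'' h1 h2 h3
end

section
/- Theorem 3 (strict inequality): if N ≥ 3, all amplitudes are nonnegative (u i ≥ 0 for all i), and the squared amplitudes are not all equal (there exist i, j with (u i)² ≠ (u j)²), then for any three pairwise distinct positions w, w', w'' we have E[X_w² · X_{w'}² · X_{w''}²] < m₂³. -/
/-! With `a = u²` and `X v = a (σ v)`, the identity `∑ v, X v = ∑ i, a i` holds for every
`σ`, and the uniform law of `σ` is invariant under `σ ↦ σ * τ`. Multiplying that identity into a
product over some positions and averaging, all positions not yet used contribute alike. With
`m = (∑ i, a i) / N` this gives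

  `N m E[X w] = E[X w ^ 2] + (N - 1) E[X w X w']`,
  `N m E[X w X w'] = E[X w ^ 2 X w'] + E[X w X w' ^ 2] + (N - 2) E[X w X w' X w'']`.

Strict Jensen, `m² < E[X w ^ 2]` because the `a i` are not all equal, turns the first identity
into `E[X w X w'] < m²`; the bound `2xyz ≤ (x² + y²) z` turns the second into
`E[X w X w' X w''] ≤ m E[X w X w']`. -/

open Finset Equiv

section

variable {N : ℕ}

lemma permExpect_const (c : ℝ) : permExpect N (fun _ => c) = c := by
  simp [permExpect]

lemma permExpect_add (f g : Perm (Fin N) → ℝ) :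
    permExpect N (fun σ => f σ + g σ) = permExpect N f + permExpect N g := by
  simp only [permExpect, sum_add_distrib, add_div]

lemma permExpect_const_mul (c : ℝ) (f : Perm (Fin N) → ℝ) :
    permExpect N (fun σ => c * f σ) = c * permExpect N f := by
  simp only [permExpect, ← mul_sum, mul_div_assoc]

lemma permExpect_sum {ι : Type*} (s : Finset ι) (f : ι → Perm (Fin N) → ℝ) :
    permExpect N (fun σ => ∑ i ∈ s, f i σ) = ∑ i ∈ s, permExpect N (f i) := by
  simp only [permExpect, sum_div]
  exact sum_comm

lemma permExpect_mono {f g : Perm (Fin N) → ℝ} (h : ∀ σ, f σ ≤ g σ) :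
    permExpect N f ≤ permExpect N g :=
  div_le_div_of_nonneg_right (sum_le_sum fun σ _ => h σ) (Nat.cast_nonneg _)

lemma permExpect_nonneg {f : Perm (Fin N) → ℝ} (h : ∀ σ, 0 ≤ f σ) :
    0 ≤ permExpect N f :=
  div_nonneg (sum_nonneg fun σ _ => h σ) (Nat.cast_nonneg _)

lemma permExpect_comp_mul_right (f : Perm (Fin N) → ℝ) (τ : Perm (Fin N)) :
    permExpect N (fun σ => f (σ * τ)) = permExpect N f := by
  rw [permExpect, permExpect]
  congr 1
  exact Equiv.sum_comp (Equiv.mulRight τ) f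

variable (a : Fin N → ℝ)

lemma sum_mul_permExpect (g : Perm (Fin N) → ℝ) {s : Finset (Fin N)} {r : Fin N}
    (hg : ∀ σ v, v ∉ s → g (σ * swap v r) = g σ) :
    (∑ i, a i) * permExpect N g
      = ∑ v ∈ s, permExpect N (fun σ => g σ * a (σ v))
        + (N - #s) * permExpect N (fun σ => g σ * a (σ r)) := by
  have houtside : ∀ v ∉ s, permExpect N (fun σ => g σ * a (σ v))
      = permExpect N (fun σ => g σ * a (σ r)) := fun v hv => by
    rw [← permExpect_comp_mul_right _ (swap v r)]
    simp only [hg _ v hv, Perm.mul_apply, swap_apply_left]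
  have hcard : ((#sᶜ : ℕ) : ℝ) = N - #s := by
    rw [card_compl, Fintype.card_fin,
      Nat.cast_sub (card_le_univ s |>.trans_eq (Fintype.card_fin N))]
  calc (∑ i, a i) * permExpect N g
      = permExpect N (fun σ => ∑ v, g σ * a (σ v)) := by
        rw [← permExpect_const_mul]
        simp only [← mul_sum, Equiv.sum_comp, mul_comm]
    _ = ∑ v, permExpect N (fun σ => g σ * a (σ v)) := permExpect_sum _ _
    _ = _ := by
      rw [← sum_add_sum_compl s, sum_congr rfl fun v hv => houtside v (mem_compl.1 hv),
        sum_const, nsmul_eq_mul, hcard]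

lemma permExpect_apply (p : Fin N) : permExpect N (fun σ => a (σ p)) = (∑ i, a i) / N := by
  have hN : (N : ℝ) ≠ 0 := Nat.cast_ne_zero.2 p.pos.ne'
  have key := sum_mul_permExpect a (fun _ => 1) (s := ∅) (r := p) fun _ _ _ => rfl
  simp only [permExpect_const, sum_empty, card_empty, one_mul, mul_one, zero_add,
    Nat.cast_zero, sub_zero] at key
  rw [key, mul_div_cancel_left₀ _ hN]

lemma sq_sum_div_card_lt (hne : ∃ i j, a i ≠ a j) :
    ((∑ i, a i) / N) ^ 2 < (∑ i, a i ^ 2) / N := by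
  obtain ⟨i, j, hij⟩ := hne
  have hN : (0 : ℝ) < N := Nat.cast_pos.2 i.pos
  have := (even_two.strictConvexOn_pow two_ne_zero).map_sum_lt (t := univ)
    (w := fun _ => 1 / (N : ℝ)) (p := a) (fun _ _ => by positivity) (by simp [hN.ne'])
    (fun _ _ => Set.mem_univ _)
    ⟨i, mem_univ _, j, mem_univ _, hij⟩
  simpa only [smul_eq_mul, one_div_mul_eq_div, ← sum_div] using this

lemma permExpect_mul_apply_lt (hne : ∃ i j, a i ≠ a j) {p q : Fin N} (hpq : p ≠ q) :
    permExpect N (fun σ => a (σ p) * a (σ q)) < ((∑ i, a i) / N) ^ 2 := by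
  have hN : (1 : ℝ) < N := by
    exact_mod_cast (Fintype.one_lt_card_iff.2 ⟨p, q, hpq⟩).trans_eq (Fintype.card_fin N)
  have key := sum_mul_permExpect a (fun σ => a (σ p)) (s := {p}) (r := q) fun σ v hv => by
    rw [Perm.mul_apply, swap_apply_of_ne_of_ne (Ne.symm (mem_singleton.not.1 hv)) hpq]
  simp only [sum_singleton, card_singleton, Nat.cast_one, permExpect_apply, ← sq] at key
  rw [permExpect_apply (fun i => a i ^ 2)] at key
  have hS : (∑ i, a i) * ((∑ i, a i) / N) = N * ((∑ i, a i) / N) ^ 2 := by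
    field_simp
  have jensen := sq_sum_div_card_lt a hne
  nlinarith

lemma permExpect_mul_mul_apply_le (ha : ∀ i, 0 ≤ a i) {p q r : Fin N}
    (hpq : p ≠ q) (hpr : p ≠ r) (hqr : q ≠ r) :
    permExpect N (fun σ => a (σ p) * a (σ q) * a (σ r))
      ≤ (∑ i, a i) / N * permExpect N (fun σ => a (σ p) * a (σ q)) := by
  have hN : (0 : ℝ) < N := Nat.cast_pos.2 p.pos
  have key := sum_mul_permExpect a (fun σ => a (σ p) * a (σ q)) (s := {p, q}) (r := r)
    fun σ v hv => by
      simp only [mem_insert, mem_singleton, not_or] at hv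
      simp only [Perm.mul_apply, swap_apply_of_ne_of_ne (Ne.symm hv.1) hpr,
        swap_apply_of_ne_of_ne (Ne.symm hv.2) hqr]
  rw [sum_pair hpq, card_pair hpq, Nat.cast_ofNat] at key
  -- `2 xyz ≤ (x² + y²) z`, and `x² z`, `y² z` have the same laws as `x² y`, `x y²`
  have hswap_qr : permExpect N (fun σ => a (σ p) ^ 2 * a (σ r))
      = permExpect N (fun σ => a (σ p) * a (σ q) * a (σ p)) := by
    rw [← permExpect_comp_mul_right _ (swap q r)]
    simp only [Perm.mul_apply, swap_apply_of_ne_of_ne hpq hpr, swap_apply_right]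
    congr 1; ext σ; ring
  have hswap_pr : permExpect N (fun σ => a (σ q) ^ 2 * a (σ r))
      = permExpect N (fun σ => a (σ p) * a (σ q) * a (σ q)) := by
    rw [← permExpect_comp_mul_right _ (swap p r)]
    simp only [Perm.mul_apply, swap_apply_of_ne_of_ne (Ne.symm hpq) hqr, swap_apply_right]
    congr 1; ext σ; ring
  have hamgm : 2 * permExpect N (fun σ => a (σ p) * a (σ q) * a (σ r))
      ≤ permExpect N (fun σ => a (σ p) ^ 2 * a (σ r))
        + permExpect N (fun σ => a (σ q) ^ 2 * a (σ r)) := by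
    rw [← permExpect_const_mul, ← permExpect_add]
    exact permExpect_mono fun σ => by
      nlinarith [mul_nonneg (ha (σ r)) (sq_nonneg (a (σ p) - a (σ q)))]
  rw [div_mul_eq_mul_div, le_div_iff₀ hN]
  linear_combination hamgm - key + hswap_qr + hswap_pr

end

theorem corr_triple_second_lt_general (N : ℕ) (u : Fin N → ℝ)
    (hne : ∃ i j : Fin N, (u i) ^ 2 ≠ (u j) ^ 2)
    (w w' w'' : Fin N) (h1 : w ≠ w') (h2 : w ≠ w'') (h3 : w' ≠ w'') :
    permExpect N (fun σ => (u (σ w)) ^ 2 * (u (σ w')) ^ 2 * (u (σ w'')) ^ 2)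
      < (empMoment N u 2) ^ 3 := by
  set a : Fin N → ℝ := fun i => u i ^ 2
  have hm : empMoment N u 2 = (∑ i, a i) / N := one_div_mul_eq_div _ _
  have hm_nonneg : 0 ≤ empMoment N u 2 := by rw [hm]; positivity
  have h3pt := permExpect_mul_mul_apply_le a (fun i => sq_nonneg (u i)) h1 h2 h3
  have h2pt := permExpect_mul_apply_lt a hne h1
  have h2pt_nonneg : 0 ≤ permExpect N (fun σ => a (σ w) * a (σ w')) :=
    permExpect_nonneg fun σ => by positivity
  rw [← hm] at h3pt h2pt
  have hm_pos : 0 < empMoment N u 2 := by nlinarith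
  calc _ ≤ empMoment N u 2 * permExpect N (fun σ => a (σ w) * a (σ w')) := h3pt
    _ < empMoment N u 2 * empMoment N u 2 ^ 2 := mul_lt_mul_of_pos_left h2pt hm_pos
    _ = empMoment N u 2 ^ 3 := by ring

/-- Theorem 3 (strict inequality): for nonnegative amplitudes whose squares are not all
equal, for pairwise distinct positions `w, w', w''`, `E[X_w² · X_{w'}² · X_{w''}²] < m₂³`. -/
theorem corr_triple_second_lt (N : ℕ) (hN : 3 ≤ N) (u : Fin N → ℝ)
    (hpos : ∀ i, 0 ≤ u i)
    (hne : ∃ i j : Fin N, (u i) ^ 2 ≠ (u j) ^ 2)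
    (w w' w'' : Fin N) (h1 : w ≠ w') (h2 : w ≠ w'') (h3 : w' ≠ w'') :
    permExpect N (fun σ => (u (σ w)) ^ 2 * (u (σ w')) ^ 2 * (u (σ w'')) ^ 2)
      < (empMoment N u 2) ^ 3 :=
  corr_triple_second_lt_general N u hne w w' w'' h1 h2 h3
end

section
/- Theorem 4 (ρ_{S1} for 1-D mapping): let N ≥ 2 and let σ, π be independent uniformly random permutations of Fin N (product of uniform measures on Equiv.Perm (Fin N) × Equiv.Perm (Fin N)); set X_w = u (σ w), Y_w = u (π w) and symbol energy E_w = X_w² + Y_w². Then for any two distinct positions w ≠ w', E[E_w · E_{w'}] = 2ρ₁ + 2m₂², where ρ₁ = (N·m₂² − m₄)/(N − 1). -/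
/-!
Reindexing `σ ↦ σ * swap a b` shows that `∑ σ, f (σ a)` does not depend on `a`, and that
`∑ σ, f (σ a) * g (σ b)` does not depend on `b ≠ a`; summing over the free position then evaluates
both sums through the moments of `f` and `g`. Since `σ` and `π` are independent, `E[E_w E_w']`
splits into two same-permutation correlations and two products of marginal means.
-/

/-- Expectation of a real-valued random variable on the finite probability space
`Equiv.Perm (Fin N) × Equiv.Perm (Fin N)` of pairs of independent uniformly random
permutations (product of uniform measures = uniform measure on the product). -/
noncomputable def permExpect2 (N : ℕ)
    (f : Equiv.Perm (Fin N) × Equiv.Perm (Fin N) → ℝ) : ℝ :=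
  (∑ p : Equiv.Perm (Fin N) × Equiv.Perm (Fin N), f p)
    / (Fintype.card (Equiv.Perm (Fin N) × Equiv.Perm (Fin N)) : ℝ)

open Finset Equiv

section
variable {α R : Type*} [Fintype α] [DecidableEq α]

theorem sum_perm_apply_eq [AddCommMonoid R] (f : α → R) (a b : α) :
    ∑ σ : Perm α, f (σ a) = ∑ σ : Perm α, f (σ b) :=
  Fintype.sum_equiv (Equiv.mulRight (swap a b)) _ _ fun σ => by simp [Perm.mul_apply]

theorem card_mul_sum_perm_apply [CommSemiring R] (f : α → R) (a : α) :
    (Fintype.card α : R) * ∑ σ : Perm α, f (σ a) = (Fintype.card α).factorial * ∑ i, f i := by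
  calc (Fintype.card α : R) * ∑ σ : Perm α, f (σ a)
      = ∑ b : α, ∑ σ : Perm α, f (σ b) := by
        simp [sum_perm_apply_eq f _ a, card_univ]
    _ = ∑ σ : Perm α, ∑ b, f (σ b) := Finset.sum_comm
    _ = (Fintype.card α).factorial * ∑ i, f i := by
        simp [Equiv.sum_comp, Fintype.card_perm]

theorem sum_perm_apply_mul_apply_eq [CommSemiring R] (f g : α → R) {a b c : α}
    (hab : a ≠ b) (hac : a ≠ c) :
    ∑ σ : Perm α, f (σ a) * g (σ b) = ∑ σ : Perm α, f (σ a) * g (σ c) :=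
  Fintype.sum_equiv (Equiv.mulRight (swap b c)) _ _ fun σ => by
    simp [Perm.mul_apply, swap_apply_of_ne_of_ne hab hac]

theorem card_mul_card_sub_one_mul_sum_perm_apply_mul_apply [CommRing R] (f g : α → R)
    {a b : α} (hab : a ≠ b) :
    (Fintype.card α : R) * (Fintype.card α - 1) * ∑ σ : Perm α, f (σ a) * g (σ b)
      = (Fintype.card α).factorial * ((∑ i, f i) * (∑ i, g i) - ∑ i, f i * g i) := by
  have hcard : ((#(univ.erase a) : ℕ) : R) = Fintype.card α - 1 := by
    rw [card_erase_of_mem (mem_univ a), card_univ, Nat.cast_pred (Fintype.card_pos_iff.2 ⟨a⟩)]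
  have hsum : ((Fintype.card α : R) - 1) * ∑ σ : Perm α, f (σ a) * g (σ b)
      = ∑ σ : Perm α, f (σ a) * ((∑ i, g i) - g (σ a)) := by
    calc _ = ∑ c ∈ univ.erase a, ∑ σ : Perm α, f (σ a) * g (σ c) := by
          rw [← hcard, ← nsmul_eq_mul, ← sum_const]
          exact sum_congr rfl fun c hc =>
            sum_perm_apply_mul_apply_eq f g hab (ne_of_mem_erase hc).symm
      _ = _ := by
          rw [sum_comm]
          refine sum_congr rfl fun σ _ => ?_
          rw [← mul_sum, ← Equiv.sum_comp σ g, ← add_sum_erase _ _ (mem_univ a)]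
          ring
  rw [mul_assoc, hsum, card_mul_sum_perm_apply (fun i => f i * ((∑ j, g j) - g i)) a]
  simp only [mul_sub, sum_sub_distrib, sum_mul]
end

theorem sum_prod_add_mul_add {β R : Type*} [Fintype β] [CommRing R] (x y : β → R) :
    ∑ p : β × β, (x p.1 + x p.2) * (y p.1 + y p.2)
      = 2 * Fintype.card β * ∑ s, x s * y s + 2 * (∑ s, x s) * ∑ s, y s := by
  simp only [Fintype.sum_prod_type, add_mul, mul_add, sum_add_distrib, sum_const, card_univ,
    nsmul_eq_mul, ← sum_mul, ← mul_sum]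
  ring

/-- Theorem 4 (ρ_{S1} for 1-D mapping): with independent uniform permutations `σ, π`,
symbol energy `E_w = u(σ w)² + u(π w)²`; for `w ≠ w'`,
`E[E_w·E_{w'}] = 2ρ₁ + 2m₂²` with `ρ₁ = (N·m₂² − m₄)/(N−1)`. -/
theorem rhoS1_oneD (N : ℕ) (hN : 2 ≤ N) (u : Fin N → ℝ)
    (w w' : Fin N) (hww' : w ≠ w') :
    permExpect2 N (fun p =>
        ((u (p.1 w)) ^ 2 + (u (p.2 w)) ^ 2) * ((u (p.1 w')) ^ 2 + (u (p.2 w')) ^ 2))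
      = 2 * (((N : ℝ) * (empMoment N u 2) ^ 2 - empMoment N u 4) / ((N : ℝ) - 1))
        + 2 * (empMoment N u 2) ^ 2 := by
  unfold permExpect2 empMoment
  have hN1 : (N : ℝ) - 1 ≠ 0 := by
    have : (2 : ℝ) ≤ N := by exact_mod_cast hN
    linarith
  set x : Fin N → ℝ := fun i => u i ^ 2
  have hmarg (v : Fin N) : ∑ σ : Perm (Fin N), x (σ v) = N.factorial * (∑ i, x i) / N := by
    rw [eq_div_iff (by positivity), mul_comm]
    simpa using card_mul_sum_perm_apply x v
  have hpair : ∑ σ : Perm (Fin N), x (σ w) * x (σ w')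
      = N.factorial * ((∑ i, x i) ^ 2 - ∑ i, x i * x i) / (N * (N - 1)) := by
    rw [eq_div_iff (mul_ne_zero (by positivity) hN1), mul_comm, sq]
    simpa using card_mul_card_sub_one_mul_sum_perm_apply_mul_apply x x hww'
  have hfourth : ∑ i, u i ^ 4 = ∑ i, x i * x i := sum_congr rfl fun i _ => by ring
  rw [sum_prod_add_mul_add (fun σ : Perm (Fin N) => x (σ w)) (fun σ => x (σ w')), hmarg, hmarg,
    hpair, hfourth, Fintype.card_prod, Fintype.card_perm, Fintype.card_fin]
  push_cast
  field_simp
end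

section
/- Theorem 4 (ρ_{S1} for 2-D mapping): let N = 2M with M ≥ 2, let σ be a uniformly random permutation of Fin N, X_i = u (σ i), and define the symbol energy E_w = X_{2w}² + X_{2w+1}² for w : Fin M. Then for any two distinct symbol times w ≠ w', E[E_w · E_{w'}] = 4ρ₁, where ρ₁ = (N·m₂² − m₄)/(N − 1). -/
/-- Symbol energy under 2-D mapping: `E_w = X_{2w}² + X_{2w+1}²` with `X_i = u (σ i)`,
for a block of length `N = 2M`. -/
noncomputable def energy2D (M : ℕ) (u : Fin (2 * M) → ℝ)
    (σ : Equiv.Perm (Fin (2 * M))) (w : Fin M) : ℝ :=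
  (u (σ ⟨2 * w.val, by have := w.isLt; omega⟩)) ^ 2
    + (u (σ ⟨2 * w.val + 1, by have := w.isLt; omega⟩)) ^ 2

open Finset

lemma exists_perm_two {N : ℕ} {a b a' b' : Fin N} (hab : a ≠ b) (hab' : a' ≠ b') :
    ∃ τ : Equiv.Perm (Fin N), τ a' = a ∧ τ b' = b := by
  set c := Equiv.swap a' a b' with hc
  have h1 : Equiv.swap a' a a' = a := Equiv.swap_apply_left _ _
  have hca : c ≠ a := fun h => hab'
    ((Equiv.swap a' a).injective (by rw [hc] at h; rw [h, h1]))
  refine ⟨(Equiv.swap a' a).trans (Equiv.swap c b), ?_, ?_⟩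
  · simp only [Equiv.trans_apply, h1]
    exact Equiv.swap_apply_of_ne_of_ne (Ne.symm hca) hab
  · simp only [Equiv.trans_apply, ← hc]
    exact Equiv.swap_apply_left _ _

lemma sum_perm_pair_invariant {N : ℕ} (F : Fin N → Fin N → ℝ) {a b a' b' : Fin N}
    (hab : a ≠ b) (hab' : a' ≠ b') :
    ∑ σ : Equiv.Perm (Fin N), F (σ a) (σ b)
      = ∑ σ : Equiv.Perm (Fin N), F (σ a') (σ b') := by
  obtain ⟨τ, ha, hb⟩ := exists_perm_two hab hab'
  calc ∑ σ : Equiv.Perm (Fin N), F (σ a) (σ b)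
      = ∑ σ : Equiv.Perm (Fin N), F ((σ * τ) a') ((σ * τ) b') := by
        simp [Equiv.Perm.mul_apply, ha, hb]
    _ = _ := Equiv.sum_comp (Equiv.mulRight τ) (fun σ => F (σ a') (σ b'))

lemma perm_pair_sum {N : ℕ} (v : Fin N → ℝ) {a b : Fin N} (hab : a ≠ b) :
    (N : ℝ) * ((N : ℝ) - 1) * ∑ σ : Equiv.Perm (Fin N), v (σ a) * v (σ b)
      = (Fintype.card (Equiv.Perm (Fin N)) : ℝ)
          * ((∑ i, v i) ^ 2 - ∑ i, (v i) ^ 2) := by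
  have hN1 : 1 ≤ N := Nat.pos_of_ne_zero (by rintro rfl; exact a.elim0)
  have key : ∀ σ : Equiv.Perm (Fin N),
      ∑ p : Fin N, ∑ q ∈ Finset.univ.erase p, v (σ p) * v (σ q)
        = (∑ i, v i) ^ 2 - ∑ i, (v i) ^ 2 := by
    intro σ
    have hsum : ∀ g : Fin N → ℝ, ∑ q : Fin N, g (σ q) = ∑ q, g q :=
      fun g => Equiv.sum_comp σ g
    calc ∑ p : Fin N, ∑ q ∈ Finset.univ.erase p, v (σ p) * v (σ q)
        = ∑ p : Fin N, v (σ p) * ((∑ i, v i) - v (σ p)) := by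
          refine Finset.sum_congr rfl fun p _ => ?_
          rw [← Finset.mul_sum, Finset.sum_erase_eq_sub (Finset.mem_univ p), hsum v]
      _ = (∑ i, v i) ^ 2 - ∑ i, (v i) ^ 2 := by
          simp only [mul_sub]
          rw [Finset.sum_sub_distrib, ← Finset.sum_mul, hsum v,
            hsum (fun i => v i * v i)]
          ring_nf
  calc (N : ℝ) * ((N : ℝ) - 1) * ∑ σ : Equiv.Perm (Fin N), v (σ a) * v (σ b)
      = ∑ p : Fin N, ∑ q ∈ Finset.univ.erase p,
          ∑ σ : Equiv.Perm (Fin N), v (σ a) * v (σ b) := by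
        simp only [Finset.sum_const, Finset.card_erase_of_mem (Finset.mem_univ _),
          Finset.card_univ, Fintype.card_fin, nsmul_eq_mul]
        rw [Nat.cast_sub hN1]
        push_cast
        ring
    _ = ∑ p : Fin N, ∑ q ∈ Finset.univ.erase p,
          ∑ σ : Equiv.Perm (Fin N), v (σ p) * v (σ q) := by
        refine Finset.sum_congr rfl fun p _ => Finset.sum_congr rfl fun q hq => ?_
        exact sum_perm_pair_invariant (fun i j => v i * v j) hab
          (Ne.symm (Finset.ne_of_mem_erase hq))
    _ = ∑ p : Fin N, ∑ σ : Equiv.Perm (Fin N),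
          ∑ q ∈ Finset.univ.erase p, v (σ p) * v (σ q) :=
        Finset.sum_congr rfl fun p _ => Finset.sum_comm
    _ = ∑ σ : Equiv.Perm (Fin N), ∑ p : Fin N,
          ∑ q ∈ Finset.univ.erase p, v (σ p) * v (σ q) := Finset.sum_comm
    _ = ∑ σ : Equiv.Perm (Fin N), ((∑ i, v i) ^ 2 - ∑ i, (v i) ^ 2) :=
        Finset.sum_congr rfl fun σ _ => key σ
    _ = _ := by rw [Finset.sum_const, Finset.card_univ, nsmul_eq_mul]



lemma permExpect_quad (N : ℕ) (hN : 2 ≤ N) (v : Fin N → ℝ)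
    {a1 a2 b1 b2 : Fin N} (h11 : a1 ≠ b1) (h12 : a1 ≠ b2)
    (h21 : a2 ≠ b1) (h22 : a2 ≠ b2) :
    permExpect N (fun σ => (v (σ a1) + v (σ a2)) * (v (σ b1) + v (σ b2)))
      = 4 * ((N : ℝ) * ((1 / (N : ℝ)) * ∑ i, v i) ^ 2
            - (1 / (N : ℝ)) * ∑ i, (v i) ^ 2) / ((N : ℝ) - 1) := by
  have hn1' : (1 : ℝ) < (N : ℝ) := by exact_mod_cast hN.trans_lt' one_lt_two
  have hn0 : (N : ℝ) ≠ 0 := by positivity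
  have hn1 : (N : ℝ) - 1 ≠ 0 := by linarith
  have hcard : 0 < Fintype.card (Equiv.Perm (Fin N)) := Fintype.card_pos
  have hc0 : (Fintype.card (Equiv.Perm (Fin N)) : ℝ) ≠ 0 := by
    exact_mod_cast hcard.ne'
  have hT : ∀ {p q : Fin N}, p ≠ q →
      ∑ σ : Equiv.Perm (Fin N), v (σ p) * v (σ q)
        = (Fintype.card (Equiv.Perm (Fin N)) : ℝ)
            * ((∑ i, v i) ^ 2 - ∑ i, (v i) ^ 2) / ((N : ℝ) * ((N : ℝ) - 1)) := by
    intro p q hpq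
    have h := perm_pair_sum v hpq
    rw [eq_div_iff (mul_ne_zero hn0 hn1)]
    linarith [h]
  have hexp : ∑ σ : Equiv.Perm (Fin N),
        (v (σ a1) + v (σ a2)) * (v (σ b1) + v (σ b2))
      = (∑ σ : Equiv.Perm (Fin N), v (σ a1) * v (σ b1))
        + (∑ σ : Equiv.Perm (Fin N), v (σ a1) * v (σ b2))
        + (∑ σ : Equiv.Perm (Fin N), v (σ a2) * v (σ b1))
        + (∑ σ : Equiv.Perm (Fin N), v (σ a2) * v (σ b2)) := by
    rw [← Finset.sum_add_distrib, ← Finset.sum_add_distrib, ← Finset.sum_add_distrib]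
    exact Finset.sum_congr rfl fun σ _ => by ring
  rw [permExpect, hexp, hT h11, hT h12, hT h21, hT h22]
  field_simp
  ring

/-- Theorem 4 (ρ_{S1} for 2-D mapping): for `N = 2M`, `M ≥ 2`, and distinct symbol
times `w ≠ w'`, `E[E_w·E_{w'}] = 4ρ₁` with `ρ₁ = (N·m₂² − m₄)/(N−1)`. -/
theorem rhoS1_twoD (M : ℕ) (hM : 2 ≤ M) (u : Fin (2 * M) → ℝ)
    (w w' : Fin M) (hww' : w ≠ w') :
    permExpect (2 * M) (fun σ => energy2D M u σ w * energy2D M u σ w')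
      = 4 * (((2 * M : ℕ) : ℝ) * (empMoment (2 * M) u 2) ^ 2 - empMoment (2 * M) u 4)
          / (((2 * M : ℕ) : ℝ) - 1) := by
  have hw := w.isLt
  have hw' := w'.isLt
  have hvv : w.val ≠ w'.val := fun h => hww' (Fin.ext h)
  have hN : 2 ≤ 2 * M := by omega
  have key := permExpect_quad (2 * M) hN (fun i => (u i) ^ 2)
    (a1 := ⟨2 * w.val, by omega⟩) (a2 := ⟨2 * w.val + 1, by omega⟩)
    (b1 := ⟨2 * w'.val, by omega⟩) (b2 := ⟨2 * w'.val + 1, by omega⟩)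
    (by simp [Fin.ext_iff]; omega) (by simp [Fin.ext_iff]; omega)
    (by simp [Fin.ext_iff]; omega) (by simp [Fin.ext_iff]; omega)
  have hfun : (fun σ : Equiv.Perm (Fin (2 * M)) =>
      energy2D M u σ w * energy2D M u σ w')
      = fun σ => ((fun i => (u i) ^ 2) (σ ⟨2 * w.val, by omega⟩)
            + (fun i => (u i) ^ 2) (σ ⟨2 * w.val + 1, by omega⟩))
          * ((fun i => (u i) ^ 2) (σ ⟨2 * w'.val, by omega⟩)
            + (fun i => (u i) ^ 2) (σ ⟨2 * w'.val + 1, by omega⟩)) := rfl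
  rw [hfun, key, empMoment, empMoment]
  have h4 : ∑ i : Fin (2 * M), (u i) ^ 4
      = ∑ i : Fin (2 * M), ((fun i => (u i) ^ 2) i) ^ 2 :=
    Finset.sum_congr rfl fun i _ => by ring
  rw [h4]
end

section
/- Theorem 4 (ρ_{X1} for 4-D mapping): let N = 4M with M ≥ 1, let σ be a uniformly random permutation of Fin N, X_i = u (σ i), and define the polarization-x and polarization-y symbol energies E^x_w = X_{4w}² + X_{4w+1}² and E^y_w = X_{4w+2}² + X_{4w+3}² for w : Fin M. Then for all symbol times w, w' (including w = w'), E[E^x_w · E^y_{w'}] = 4ρ₁, where ρ₁ = (N·m₂² − m₄)/(N − 1). -/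
/-- Polarization-x symbol energy under 4-D mapping: `E^x_w = X_{4w}² + X_{4w+1}²`
with `X_i = u (σ i)`, for a block of length `N = 4M`. -/
noncomputable def energyX4D (M : ℕ) (u : Fin (4 * M) → ℝ)
    (σ : Equiv.Perm (Fin (4 * M))) (w : Fin M) : ℝ :=
  (u (σ ⟨4 * w.val, by have := w.isLt; omega⟩)) ^ 2
    + (u (σ ⟨4 * w.val + 1, by have := w.isLt; omega⟩)) ^ 2

/-- Polarization-y symbol energy under 4-D mapping: `E^y_w = X_{4w+2}² + X_{4w+3}²`
with `X_i = u (σ i)`, for a block of length `N = 4M`. -/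
noncomputable def energyY4D (M : ℕ) (u : Fin (4 * M) → ℝ)
    (σ : Equiv.Perm (Fin (4 * M))) (w : Fin M) : ℝ :=
  (u (σ ⟨4 * w.val + 2, by have := w.isLt; omega⟩)) ^ 2
    + (u (σ ⟨4 * w.val + 3, by have := w.isLt; omega⟩)) ^ 2

open Finset

lemma exists_perm_map {N : ℕ} {i j p q : Fin N} (hij : i ≠ j) (hpq : p ≠ q) :
    ∃ τ : Equiv.Perm (Fin N), τ i = p ∧ τ j = q := by
  set a := Equiv.swap i p j with ha
  have hap : a ≠ p := by
    intro h
    apply hij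
    have := congrArg (Equiv.swap i p) h
    simpa [ha] using this.symm
  refine ⟨(Equiv.swap a q) * (Equiv.swap i p), ?_, ?_⟩
  · simp only [Equiv.Perm.mul_apply, Equiv.swap_apply_left]
    exact Equiv.swap_apply_of_ne_of_ne (Ne.symm hap) hpq
  · simp only [Equiv.Perm.mul_apply, ← ha, Equiv.swap_apply_left]

lemma sum_perm_invariant {N : ℕ} (f g : Fin N → ℝ) (i j : Fin N) (τ : Equiv.Perm (Fin N)) :
    ∑ σ : Equiv.Perm (Fin N), f (σ (τ i)) * g (σ (τ j))
      = ∑ σ : Equiv.Perm (Fin N), f (σ i) * g (σ j) := by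
  refine Fintype.sum_equiv (Equiv.mulRight τ) _ _ (fun σ => ?_)
  simp [Equiv.Perm.mul_apply]

lemma pair_sum {N : ℕ} (f g : Fin N → ℝ) {i j : Fin N} (hij : i ≠ j) :
    ((N : ℝ) * (N : ℝ) - (N : ℝ)) * ∑ σ : Equiv.Perm (Fin N), f (σ i) * g (σ j)
      = (Fintype.card (Equiv.Perm (Fin N)) : ℝ)
          * ((∑ p, f p) * (∑ q, g q) - ∑ p, f p * g p) := by
  have key : ∑ x ∈ (univ : Finset (Fin N)).offDiag,
      (∑ σ : Equiv.Perm (Fin N), f (σ x.1) * g (σ x.2))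
      = ((univ : Finset (Fin N)).offDiag.card : ℝ)
          * ∑ σ : Equiv.Perm (Fin N), f (σ i) * g (σ j) := by
    rw [Finset.sum_congr rfl (fun x hx => ?_), Finset.sum_const, nsmul_eq_mul]
    obtain ⟨hx1, hx2, hxne⟩ := Finset.mem_offDiag.mp hx
    obtain ⟨τ, hτ1, hτ2⟩ := exists_perm_map hij hxne
    rw [← hτ1, ← hτ2, sum_perm_invariant]
  have key2 : ∑ x ∈ (univ : Finset (Fin N)).offDiag,
      (∑ σ : Equiv.Perm (Fin N), f (σ x.1) * g (σ x.2))
      = (Fintype.card (Equiv.Perm (Fin N)) : ℝ)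
          * ((∑ p, f p) * (∑ q, g q) - ∑ p, f p * g p) := by
    rw [Finset.sum_comm]
    have inner : ∀ σ : Equiv.Perm (Fin N),
        ∑ x ∈ (univ : Finset (Fin N)).offDiag, f (σ x.1) * g (σ x.2)
          = (∑ p, f p) * (∑ q, g q) - ∑ p, f p * g p := by
      intro σ
      have hsplit : ∑ x ∈ (univ : Finset (Fin N)).diag, f (σ x.1) * g (σ x.2)
          + ∑ x ∈ (univ : Finset (Fin N)).offDiag, f (σ x.1) * g (σ x.2)
          = ∑ x ∈ (univ : Finset (Fin N)) ×ˢ univ, f (σ x.1) * g (σ x.2) := by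
        rw [← Finset.sum_union (Finset.disjoint_diag_offDiag _),
          Finset.diag_union_offDiag]
      have hprod : ∑ x ∈ (univ : Finset (Fin N)) ×ˢ univ, f (σ x.1) * g (σ x.2)
          = (∑ p, f p) * (∑ q, g q) := by
        rw [Finset.sum_product]
        simp only [← Finset.mul_sum]
        rw [← Finset.sum_mul, Equiv.sum_comp σ f, Equiv.sum_comp σ g]
      have hdiag : ∑ x ∈ (univ : Finset (Fin N)).diag, f (σ x.1) * g (σ x.2)
          = ∑ p, f p * g p := by
        rw [Finset.sum_diag]
        exact Equiv.sum_comp σ (fun p => f p * g p)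
      linarith
    rw [Finset.sum_congr rfl (fun σ _ => inner σ), Finset.sum_const, nsmul_eq_mul,
      Finset.card_univ]
  have hle : N ≤ N * N := by
    rcases Nat.eq_zero_or_pos N with h | h
    · simp [h]
    · exact Nat.le_mul_of_pos_left N h
  have hcard : (((univ : Finset (Fin N)).offDiag.card : ℝ))
      = (N : ℝ) * (N : ℝ) - (N : ℝ) := by
    have h1 : (univ : Finset (Fin N)).offDiag.card = N * N - N := by
      simp [Finset.offDiag_card]
    rw [h1, Nat.cast_sub hle]
    push_cast
    ring
  rw [← hcard, ← key, key2]

lemma final_alg (C Nr S2 S4 : ℝ) (hC : C ≠ 0) (h1 : Nr ≠ 0) (h2 : Nr - 1 ≠ 0) :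
    (C * (S2 * S2 - S4) / (Nr * Nr - Nr) + C * (S2 * S2 - S4) / (Nr * Nr - Nr)
      + C * (S2 * S2 - S4) / (Nr * Nr - Nr) + C * (S2 * S2 - S4) / (Nr * Nr - Nr)) / C
    = 4 * (Nr * (1 / Nr * S2) ^ 2 - 1 / Nr * S4) / (Nr - 1) := by
  have h4 : Nr * Nr - Nr = Nr * (Nr - 1) := by ring
  rw [h4]
  field_simp
  ring

set_option maxHeartbeats 1600000 in
/-- Theorem 4 -/
theorem rhoX1_fourD (M : ℕ) (hM : 1 ≤ M) (u : Fin (4 * M) → ℝ)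
    (w w' : Fin M) :
    permExpect (4 * M) (fun σ => energyX4D M u σ w * energyY4D M u σ w')
      = 4 * (((4 * M : ℕ) : ℝ) * (empMoment (4 * M) u 2) ^ 2 - empMoment (4 * M) u 4)
          / (((4 * M : ℕ) : ℝ) - 1) := by
  classical
  have hN4 : 4 ≤ 4 * M := by omega
  have hNr : (4 : ℝ) ≤ ((4 * M : ℕ) : ℝ) := by exact_mod_cast hN4
  set f : Fin (4 * M) → ℝ := fun p => u p ^ 2 with hf
  set a : Fin (4 * M) := ⟨4 * w.val, by have := w.isLt; omega⟩ with hA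
  set b : Fin (4 * M) := ⟨4 * w.val + 1, by have := w.isLt; omega⟩ with hB
  set c : Fin (4 * M) := ⟨4 * w'.val + 2, by have := w'.isLt; omega⟩ with hC
  set d : Fin (4 * M) := ⟨4 * w'.val + 3, by have := w'.isLt; omega⟩ with hD
  have hac : a ≠ c := by simp [hA, hC, Fin.ext_iff]; omega
  have had : a ≠ d := by simp [hA, hD, Fin.ext_iff]; omega
  have hbc : b ≠ c := by simp [hB, hC, Fin.ext_iff]; omega
  have hbd : b ≠ d := by simp [hB, hD, Fin.ext_iff]; omega
  have hDen : ((4 * M : ℕ) : ℝ) * ((4 * M : ℕ) : ℝ) - ((4 * M : ℕ) : ℝ) ≠ 0 := by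
    nlinarith
  have hT : ∑ p, f p * f p = ∑ p, u p ^ 4 := by
    apply Finset.sum_congr rfl
    intro p _
    simp [hf]
    ring
  have key : ∀ {i j : Fin (4 * M)}, i ≠ j →
      ∑ σ : Equiv.Perm (Fin (4 * M)), f (σ i) * f (σ j)
        = (Fintype.card (Equiv.Perm (Fin (4 * M))) : ℝ)
            * ((∑ p, u p ^ 2) * (∑ p, u p ^ 2) - ∑ p, u p ^ 4)
            / (((4 * M : ℕ) : ℝ) * ((4 * M : ℕ) : ℝ) - ((4 * M : ℕ) : ℝ)) := by
    intro i j hij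
    have h := pair_sum f f hij
    rw [hT] at h
    rw [eq_div_iff hDen]
    simp only [hf] at h ⊢
    linarith
  have hsum : ∑ σ : Equiv.Perm (Fin (4 * M)), energyX4D M u σ w * energyY4D M u σ w'
      = (∑ σ : Equiv.Perm (Fin (4 * M)), f (σ a) * f (σ c))
        + (∑ σ : Equiv.Perm (Fin (4 * M)), f (σ a) * f (σ d))
        + (∑ σ : Equiv.Perm (Fin (4 * M)), f (σ b) * f (σ c))
        + (∑ σ : Equiv.Perm (Fin (4 * M)), f (σ b) * f (σ d)) := by
    rw [← Finset.sum_add_distrib, ← Finset.sum_add_distrib, ← Finset.sum_add_distrib]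
    apply Finset.sum_congr rfl
    intro σ _
    show (f (σ a) + f (σ b)) * (f (σ c) + f (σ d)) = _
    ring
  have hcard : (0 : ℝ) < (Fintype.card (Equiv.Perm (Fin (4 * M))) : ℝ) := by
    exact_mod_cast Fintype.card_pos
  rw [permExpect, hsum, key hac, key had, key hbc, key hbd]
  simp only [empMoment]
  exact final_alg _ _ _ _ (ne_of_gt hcard) (by linarith) (by linarith)
end

section
/- Theorem 4 (ρ_{X2} for 2-D mapping): let N ≥ 2 and let σ, π be independent uniformly random permutations of Fin N (product measure); set X_i = u (σ i), Y_i = u (π i), and, with N = 2M, define the polarization-x energy E^x_w = X_{2w}² + X_{2w+1}² and the polarization-y energy E^y_w = Y_{2w}² + Y_{2w+1}² for w : Fin M, M ≥ 2. Then for any two distinct symbol times w ≠ w', E[E^x_w · (E^y_{w'})²] = 4·m₂·m₄ + 4·ρ₁·m₂, where ρ₁ = (N·m₂² − m₄)/(N − 1). -/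
/-!
The two polarizations use independent permutations, so the expectation factors as
`E[E^x_w] · E[(E^y_{w'})²]`. A uniform permutation sends a fixed position to a uniform
position, and a fixed pair of distinct positions to a uniform pair of distinct positions;
hence `E[X_a²] = m₂`, `E[X_a⁴] = m₄` and, for `a ≠ b`,
`E[X_a² X_b²] = (∑_{i ≠ j} u_i² u_j²) / (N (N - 1)) = (N m₂² - m₄) / (N - 1) = ρ₁`.
Expanding the square gives `2 m₂ · (2 m₄ + 2 ρ₁)`.
-/

open Finset Equiv

namespace Equiv.Perm

variable {α β : Type*} [Fintype α] [DecidableEq α]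

theorem sum_comp_apply_eq [AddCommMonoid β] (f : α → β) (a b : α) :
    ∑ σ : Perm α, f (σ a) = ∑ σ : Perm α, f (σ b) :=
  Fintype.sum_equiv (Equiv.mulRight (swap a b)) _ _ fun σ => by simp [mul_apply]

theorem sum_comp_apply_apply_eq [AddCommMonoid β] (h : α → α → β) {a b b' : α}
    (hb : b ≠ a) (hb' : b' ≠ a) :
    ∑ σ : Perm α, h (σ a) (σ b) = ∑ σ : Perm α, h (σ a) (σ b') :=
  Fintype.sum_equiv (Equiv.mulRight (swap b b')) _ _ fun σ => by
    simp [mul_apply, swap_apply_of_ne_of_ne hb.symm hb'.symm]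

theorem card_nsmul_sum_comp_apply [AddCommMonoid β] (f : α → β) (a : α) :
    Fintype.card α • ∑ σ : Perm α, f (σ a) = Fintype.card (Perm α) • ∑ i, f i := by
  calc Fintype.card α • ∑ σ : Perm α, f (σ a)
      = ∑ b : α, ∑ σ : Perm α, f (σ b) := by
        simp only [sum_comp_apply_eq f _ a, sum_const, card_univ]
    _ = ∑ σ : Perm α, ∑ i, f i := by
        rw [sum_comm]; exact sum_congr rfl fun σ _ => Equiv.sum_comp σ f
    _ = Fintype.card (Perm α) • ∑ i, f i := by rw [sum_const, card_univ]

theorem card_mul_pred_nsmul_sum_comp_apply_apply [AddCommGroup β] (h : α → α → β)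
    {a b : α} (hab : a ≠ b) :
    (Fintype.card α * (Fintype.card α - 1)) • ∑ σ : Perm α, h (σ a) (σ b)
      = Fintype.card (Perm α) • (∑ i, ∑ j, h i j - ∑ i, h i i) := by
  set n := Fintype.card α
  have hrow : ∑ b', ∑ σ : Perm α, h (σ a) (σ b') = ∑ σ : Perm α, ∑ j, h (σ a) j := by
    rw [sum_comm]; exact sum_congr rfl fun σ _ => Equiv.sum_comp σ (h (σ a))
  have hsplit : ∑ b', ∑ σ : Perm α, h (σ a) (σ b')
      = ∑ σ : Perm α, h (σ a) (σ a) + (n - 1) • ∑ σ : Perm α, h (σ a) (σ b) := by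
    rw [← add_sum_erase _ _ (mem_univ a),
      sum_congr rfl fun b' hb' => sum_comp_apply_apply_eq h (ne_of_mem_erase hb') hab.symm,
      sum_const, card_erase_of_mem (mem_univ a), card_univ]
  have hfull := card_nsmul_sum_comp_apply (fun i => ∑ j, h i j) a
  have hdiag := card_nsmul_sum_comp_apply (fun i => h i i) a
  rw [mul_nsmul', smul_sub, ← hfull, ← hdiag, ← hrow, hsplit, smul_add, add_sub_cancel_left]

end Equiv.Perm

section PermMean

variable {α : Type*} [Fintype α] [DecidableEq α]

noncomputable def permMean (f : Perm α → ℝ) : ℝ :=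
  (∑ σ, f σ) / Fintype.card (Perm α)

theorem permMean_add (f g : Perm α → ℝ) :
    permMean (fun σ => f σ + g σ) = permMean f + permMean g := by
  simp only [permMean, sum_add_distrib, add_div]

theorem permMean_const_mul (c : ℝ) (f : Perm α → ℝ) :
    permMean (fun σ => c * f σ) = c * permMean f := by
  simp only [permMean, ← mul_sum, mul_div_assoc]

theorem permMean_comp_apply (f : α → ℝ) (a : α) :
    permMean (fun σ => f (σ a)) = (∑ i, f i) / Fintype.card α := by
  have : Nonempty α := ⟨a⟩
  have hα : (Fintype.card α : ℝ) ≠ 0 := Nat.cast_ne_zero.mpr Fintype.card_ne_zero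
  have hP : (Fintype.card (Perm α) : ℝ) ≠ 0 := Nat.cast_ne_zero.mpr Fintype.card_ne_zero
  have key := Perm.card_nsmul_sum_comp_apply f a
  rw [nsmul_eq_mul, nsmul_eq_mul] at key
  rw [permMean, div_eq_div_iff hP hα]
  linear_combination key

theorem permMean_comp_apply_apply (h : α → α → ℝ) {a b : α} (hab : a ≠ b) :
    permMean (fun σ => h (σ a) (σ b))
      = (∑ i, ∑ j, h i j - ∑ i, h i i) / (Fintype.card α * (Fintype.card α - 1)) := by
  have hα : 1 < Fintype.card α := Fintype.one_lt_card_iff.mpr ⟨a, b, hab⟩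
  have hα' : (Fintype.card α : ℝ) * (Fintype.card α - 1) ≠ 0 := by
    have : (1 : ℝ) < Fintype.card α := by exact_mod_cast hα
    exact mul_ne_zero (by positivity) (by linarith)
  have hP : (Fintype.card (Perm α) : ℝ) ≠ 0 := Nat.cast_ne_zero.mpr Fintype.card_ne_zero
  have key := Perm.card_mul_pred_nsmul_sum_comp_apply_apply h hab
  rw [nsmul_eq_mul, nsmul_eq_mul, Nat.cast_mul, Nat.cast_pred (by omega)] at key
  rw [permMean, div_eq_div_iff hP hα']
  linear_combination key

end PermMean

theorem permExpect2_mul {N : ℕ} (f g : Perm (Fin N) → ℝ) :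
    permExpect2 N (fun p => f p.1 * g p.2) = permMean f * permMean g := by
  rw [permExpect2, permMean, permMean, Fintype.sum_prod_type, ← sum_mul_sum,
    Fintype.card_prod, Nat.cast_mul, mul_div_mul_comm]

theorem permMean_pow_comp_apply {N : ℕ} (u : Fin N → ℝ) (k : ℕ) (a : Fin N) :
    permMean (fun σ => u (σ a) ^ k) = empMoment N u k := by
  rw [permMean_comp_apply (fun i => u i ^ k), Fintype.card_fin, empMoment, one_div_mul_eq_div]

theorem permMean_sq_mul_sq {N : ℕ} (u : Fin N → ℝ) {a b : Fin N} (hab : a ≠ b) :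
    permMean (fun σ => u (σ a) ^ 2 * u (σ b) ^ 2)
      = (N * empMoment N u 2 ^ 2 - empMoment N u 4) / (N - 1) := by
  have hN : (1 : ℝ) < N := by
    exact_mod_cast Fintype.card_fin N ▸ Fintype.one_lt_card_iff.mpr ⟨a, b, hab⟩
  have hdiag : ∑ i, u i ^ 2 * u i ^ 2 = ∑ i, u i ^ 4 := sum_congr rfl fun i _ => by ring
  rw [permMean_comp_apply_apply (fun i j => u i ^ 2 * u j ^ 2) hab, Fintype.card_fin,
    ← sum_mul_sum, hdiag, empMoment, empMoment]
  field_simp [sub_ne_zero.mpr hN.ne']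

section Energy

variable (M : ℕ) (u : Fin (2 * M) → ℝ) (w : Fin M)

theorem permMean_energy2D :
    permMean (fun σ => energy2D M u σ w) = 2 * empMoment (2 * M) u 2 := by
  simp only [energy2D]
  rw [permMean_add, permMean_pow_comp_apply, permMean_pow_comp_apply]
  ring

theorem permMean_energy2D_sq :
    permMean (fun σ => energy2D M u σ w ^ 2)
      = 2 * empMoment (2 * M) u 4
        + 2 * (((2 * M : ℕ) : ℝ) * empMoment (2 * M) u 2 ^ 2 - empMoment (2 * M) u 4)
            / (((2 * M : ℕ) : ℝ) - 1) := by
  set a : Fin (2 * M) := ⟨2 * w.val, by omega⟩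
  set b : Fin (2 * M) := ⟨2 * w.val + 1, by omega⟩
  have hexpand : ∀ σ : Perm (Fin (2 * M)), energy2D M u σ w ^ 2
      = u (σ a) ^ 4 + u (σ b) ^ 4 + 2 * (u (σ a) ^ 2 * u (σ b) ^ 2) := fun σ => by
    simp only [energy2D]; ring
  simp only [hexpand]
  rw [permMean_add, permMean_add, permMean_const_mul, permMean_pow_comp_apply,
    permMean_pow_comp_apply, permMean_sq_mul_sq u (a := a) (b := b) (by simp [a, b, Fin.ext_iff])]
  ring

end Energy

theorem rhoX2_twoD_general (M : ℕ) (u : Fin (2 * M) → ℝ)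
    (w w' : Fin M) :
    permExpect2 (2 * M)
        (fun p => energy2D M u p.1 w * (energy2D M u p.2 w') ^ 2)
      = 4 * empMoment (2 * M) u 2 * empMoment (2 * M) u 4
        + 4 * ((((2 * M : ℕ) : ℝ) * (empMoment (2 * M) u 2) ^ 2 - empMoment (2 * M) u 4)
            / (((2 * M : ℕ) : ℝ) - 1)) * empMoment (2 * M) u 2 := by
  rw [permExpect2_mul (fun σ => energy2D M u σ w) (fun π => energy2D M u π w' ^ 2),
    permMean_energy2D, permMean_energy2D_sq]
  ring

/-- Theorem 4 (ρ_{X2} for 2-D mapping): with independent uniform permutations `σ, π`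
providing each polarization its own permuted copy of the block (`N = 2M`, `M ≥ 2`),
for distinct symbol times `w ≠ w'`,
`E[E^x_w·(E^y_{w'})²] = 4·m₂·m₄ + 4·ρ₁·m₂` with `ρ₁ = (N·m₂² − m₄)/(N−1)`. -/
theorem rhoX2_twoD (M : ℕ) (hM : 2 ≤ M) (u : Fin (2 * M) → ℝ)
    (w w' : Fin M) (hww' : w ≠ w') :
    permExpect2 (2 * M)
        (fun p => energy2D M u p.1 w * (energy2D M u p.2 w') ^ 2)
      = 4 * empMoment (2 * M) u 2 * empMoment (2 * M) u 4
        + 4 * ((((2 * M : ℕ) : ℝ) * (empMoment (2 * M) u 2) ^ 2 - empMoment (2 * M) u 4)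
            / (((2 * M : ℕ) : ℝ) - 1)) * empMoment (2 * M) u 2 :=
  rhoX2_twoD_general M u w w'
end

section
/- Theorem 5 (ρ_{S3} for 1-D mapping): let N ≥ 3 and let σ, π be independent uniformly random permutations of Fin N (product measure); set X_w = u (σ w), Y_w = u (π w) and symbol energy E_w = X_w² + Y_w². Then for any three pairwise distinct positions w, w', w'', E[E_w · E_{w'} · E_{w''}] = 2ρ₃ + 6·ρ₁·m₂, where ρ₁ = (N·m₂² − m₄)/(N − 1) and ρ₃ = (N²·m₂³ − 3N·m₂·m₄ + 2·m₆)/((N − 1)(N − 2)). -/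
/-!
If `Φ σ` depends only on the values of a uniform random permutation `σ` on a finite set `s`
and `w ∉ s`, then right multiplication by a transposition fixing `s` shows that `E[Φ σ · h (σ w)]`
does not depend on `w ∉ s`; averaging over the `N - #s` such `w` gives
`E[Φ σ · h (σ w)] = E[Φ σ · (∑ h - ∑_{x ∈ s} h (σ x))] / (N - #s)`.
Peeling off one position at a time yields the joint moments of `u²` at one, two and three
distinct positions in terms of power sums. Expanding the product of the three energies, the
independence of the in-phase and quadrature permutations turns each cross term into a product of
such moments.
-/

open Finset Equiv
open scoped BigOperators

namespace Equiv.Perm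

variable {α K : Type*} [Fintype α] [DecidableEq α] [Field K] [CharZero K]

theorem expect_mul_apply_eq_of_notMem {s : Finset α} {Φ : Perm α → K}
    (hΦ : ∀ σ τ : Perm α, (∀ x ∈ s, σ x = τ x) → Φ σ = Φ τ) {v w : α} (hv : v ∉ s)
    (hw : w ∉ s) (h : α → K) :
    𝔼 σ, Φ σ * h (σ v) = 𝔼 σ, Φ σ * h (σ w) := by
  refine Fintype.expect_equiv (Equiv.mulRight (swap v w)) _ _ fun σ => ?_
  have hfix : ∀ x ∈ s, (σ * swap v w) x = σ x := fun x hx =>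
    congrArg σ (swap_apply_of_ne_of_ne (ne_of_mem_of_not_mem hx hv)
      (ne_of_mem_of_not_mem hx hw))
  simp [hΦ _ _ hfix]

theorem expect_mul_apply_of_notMem {s : Finset α} {Φ : Perm α → K}
    (hΦ : ∀ σ τ : Perm α, (∀ x ∈ s, σ x = τ x) → Φ σ = Φ τ) {w : α} (hw : w ∉ s)
    (h : α → K) :
    𝔼 σ, Φ σ * h (σ w)
      = (𝔼 σ, Φ σ * (∑ a, h a - ∑ x ∈ s, h (σ x))) / (Fintype.card α - #s) := by
  have hcard : (Fintype.card α - #s : K) = #sᶜ := by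
    rw [card_compl, Nat.cast_sub (card_le_univ s)]
  have hne : (#sᶜ : K) ≠ 0 := Nat.cast_ne_zero.2 (card_ne_zero_of_mem (mem_compl.2 hw))
  have hsum : ∀ σ : Perm α, ∑ a, h a - ∑ x ∈ s, h (σ x) = ∑ v ∈ sᶜ, h (σ v) := fun σ => by
    rw [← Equiv.sum_comp σ h, ← sum_compl_add_sum s, add_sub_cancel_right]
  rw [hcard, eq_div_iff hne]
  simp_rw [hsum, mul_sum, expect_sum_comm]
  rw [sum_congr rfl fun v hv => expect_mul_apply_eq_of_notMem hΦ (mem_compl.1 hv) hw h,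
    sum_const, nsmul_eq_mul, mul_comm]

theorem expect_apply (f : α → K) (w : α) :
    𝔼 σ : Perm α, f (σ w) = (∑ a, f a) / Fintype.card α := by
  simpa using expect_mul_apply_of_notMem (s := ∅) (Φ := fun _ => (1 : K)) (by simp)
    (notMem_empty w) f

theorem expect_apply_mul_apply {v w : α} (hvw : v ≠ w) (f g : α → K) :
    𝔼 σ : Perm α, f (σ v) * g (σ w)
      = ((∑ a, f a) * (∑ a, g a) - ∑ a, f a * g a)
          / (Fintype.card α * (Fintype.card α - 1)) := by
  rw [expect_mul_apply_of_notMem (s := ({v} : Finset α))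
    (fun σ τ h => by rw [h v (mem_singleton_self v)]) (notMem_singleton.2 hvw.symm)]
  have hsplit : ∀ σ : Perm α, f (σ v) * (∑ a, g a - ∑ x ∈ {v}, g (σ x))
      = f (σ v) * (∑ a, g a) - f (σ v) * g (σ v) := fun σ => by
    rw [sum_singleton, mul_sub]
  have hfg := expect_apply (fun a => f a * g a) v
  simp only [hsplit, expect_sub_distrib, ← expect_mul, expect_apply, hfg, card_singleton,
    Nat.cast_one]
  simp only [div_eq_mul_inv, mul_inv]
  ring

theorem expect_apply_mul_apply_mul_apply {u v w : α} (huv : u ≠ v) (huw : u ≠ w)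
    (hvw : v ≠ w) (f g h : α → K) :
    𝔼 σ : Perm α, f (σ u) * g (σ v) * h (σ w)
      = ((∑ a, f a) * (∑ a, g a) * (∑ a, h a) - (∑ a, f a * g a) * (∑ a, h a)
          - (∑ a, f a * h a) * (∑ a, g a) - (∑ a, g a * h a) * (∑ a, f a)
          + 2 * ∑ a, f a * g a * h a)
          / (Fintype.card α * (Fintype.card α - 1) * (Fintype.card α - 2)) := by
  rw [expect_mul_apply_of_notMem (s := ({u, v} : Finset α))
    (fun σ τ h => by rw [h u (by simp), h v (by simp)])
    (by simp [huw.symm, hvw.symm])]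
  have hsplit : ∀ σ : Perm α,
      f (σ u) * g (σ v) * (∑ a, h a - ∑ x ∈ {u, v}, h (σ x))
        = (∑ a, h a) * (f (σ u) * g (σ v)) - (f (σ u) * h (σ u)) * g (σ v)
          - f (σ u) * (g (σ v) * h (σ v)) := fun σ => by
    rw [sum_pair huv]; ring
  have hfh := expect_apply_mul_apply huv (fun a => f a * h a) g
  have hgh := expect_apply_mul_apply huv f (fun a => g a * h a)
  simp only [hsplit, expect_sub_distrib, ← mul_expect, expect_apply_mul_apply huv, hfh, hgh,
    card_pair huv, Nat.cast_ofNat]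
  have hfhg : ∑ a, f a * h a * g a = ∑ a, f a * g a * h a := sum_congr rfl fun _ _ => by ring
  have hfgh : ∑ a, f a * (g a * h a) = ∑ a, f a * g a * h a := sum_congr rfl fun _ _ => by ring
  simp only [hfhg, hfgh, div_eq_mul_inv, mul_inv]
  ring

end Equiv.Perm

theorem expect_prod_add_mul_add_mul_add {Ω K : Type*} [Fintype Ω] [Nonempty Ω]
    [Field K] [CharZero K] (F G H : Ω → K) :
    𝔼 p : Ω × Ω, (F p.1 + F p.2) * (G p.1 + G p.2) * (H p.1 + H p.2)
      = 2 * 𝔼 ω, F ω * G ω * H ω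
        + 2 * ((𝔼 ω, F ω * G ω) * 𝔼 ω, H ω + (𝔼 ω, F ω * H ω) * 𝔼 ω, G ω
          + (𝔼 ω, G ω * H ω) * 𝔼 ω, F ω) := by
  -- every summand is written as a function of `ω` times a function of `ω'`
  have hexpand : ∀ ω ω' : Ω, (F ω + F ω') * (G ω + G ω') * (H ω + H ω')
      = F ω * G ω * H ω * 1 + 1 * (F ω' * G ω' * H ω')
        + (F ω * G ω * H ω' + F ω * H ω * G ω' + G ω * H ω * F ω')
        + (H ω * (F ω' * G ω') + G ω * (F ω' * H ω') + F ω * (G ω' * H ω')) :=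
    fun _ _ => by ring
  rw [← univ_product_univ, expect_product' univ univ
    (fun ω ω' => (F ω + F ω') * (G ω + G ω') * (H ω + H ω'))]
  simp only [hexpand, expect_add_distrib, ← Fintype.expect_mul_expect, Fintype.expect_one]
  ring

/-- Theorem 5 (ρ_{S3} for 1-D mapping): with independent uniform permutations `σ, π`
and symbol energy `E_w = u(σ w)² + u(π w)²`, for pairwise distinct positions
`w, w', w''` (`N ≥ 3`), `E[E_w·E_{w'}·E_{w''}] = 2ρ₃ + 6·ρ₁·m₂` with
`ρ₁ = (N·m₂² − m₄)/(N−1)` and `ρ₃ = (N²·m₂³ − 3N·m₂·m₄ + 2·m₆)/((N−1)(N−2))`. -/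
theorem rhoS3_oneD (N : ℕ) (hN : 3 ≤ N) (u : Fin N → ℝ)
    (w w' w'' : Fin N) (h1 : w ≠ w') (h2 : w ≠ w'') (h3 : w' ≠ w'') :
    permExpect2 N (fun p =>
        ((u (p.1 w)) ^ 2 + (u (p.2 w)) ^ 2)
          * ((u (p.1 w')) ^ 2 + (u (p.2 w')) ^ 2)
          * ((u (p.1 w'')) ^ 2 + (u (p.2 w'')) ^ 2))
      = 2 * (((N : ℝ) ^ 2 * (empMoment N u 2) ^ 3
              - 3 * (N : ℝ) * empMoment N u 2 * empMoment N u 4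
              + 2 * empMoment N u 6) / (((N : ℝ) - 1) * ((N : ℝ) - 2)))
        + 6 * (((N : ℝ) * (empMoment N u 2) ^ 2 - empMoment N u 4) / ((N : ℝ) - 1))
            * empMoment N u 2 := by
  have hN3 : (3 : ℝ) ≤ N := by exact_mod_cast hN
  have hN1 : (N : ℝ) - 1 ≠ 0 := by linarith
  have hN2 : (N : ℝ) - 2 ≠ 0 := by linarith
  set a : Fin N → ℝ := fun i => u i ^ 2 with ha
  rw [permExpect2, ← Fintype.expect_eq_sum_div_card]
  refine (expect_prod_add_mul_add_mul_add (fun σ : Perm (Fin N) => a (σ w))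
    (fun σ => a (σ w')) (fun σ => a (σ w''))).trans ?_
  simp only [Perm.expect_apply_mul_apply_mul_apply h1 h2 h3, Perm.expect_apply_mul_apply h1,
    Perm.expect_apply_mul_apply h2, Perm.expect_apply_mul_apply h3, Perm.expect_apply]
  simp only [ha, empMoment, Fintype.card_fin, ← pow_add]
  field_simp
  ring
end

section
/- Theorem 6 (time-averaged second-order correlation of a block-i.i.d. energy sequence): with the spliced energy sequence E_n = B_{n / M_s} (n mod M_s), for every integer delay τ > 0 the time-averaged correlation R̄(τ) = (1/M_s) · ∑_{w=0}^{M_s−1} E[E_w · E_{w+τ}] satisfies: R̄(τ) = (τ·P² + (M_s − τ)·ρ)/M_s if τ < M_s, and R̄(τ) = P² if τ ≥ M_s. -/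
/-!
For `w < M_s`, the energies `E_w` and `E_{w+τ}` are two distinct coordinates of block `0`
as long as `w + τ < M_s`, which gives `ρ`; otherwise `E_{w+τ}` lies in a later block,
independent of block `0`, which gives `P²`. Exactly `M_s − τ` of the `M_s` delays stay
inside block `0` when `τ < M_s`, and none do when `τ ≥ M_s`.
-/

open MeasureTheory ProbabilityTheory Finset

theorem Finset.sum_range_ite_add_lt {M : Type*} [AddCommMonoid M] (n τ : ℕ) (a b : M) :
    ∑ w ∈ range n, (if w + τ < n then a else b) = (n - τ) • a + min τ n • b := by
  have hin : (range n).filter (fun w => w + τ < n) = range (n - τ) := by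
    ext w; simp only [mem_filter, mem_range]; omega
  have hout : (range n).filter (fun w => ¬ w + τ < n) = Ico (n - τ) n := by
    ext w; simp only [mem_filter, mem_range, mem_Ico]; omega
  rw [sum_ite, hin, hout, sum_const, sum_const, card_range, Nat.card_Ico]
  congr 2
  omega

theorem ProbabilityTheory.iIndepFun.integral_apply_mul_apply {Ω ι κ : Type*}
    [MeasurableSpace Ω] {μ : Measure Ω} {B : ι → Ω → κ → ℝ} (hindep : iIndepFun B μ)
    {k k' : ι} (hk : k ≠ k') (i j : κ)
    (hi : AEStronglyMeasurable (fun ω => B k ω i) μ)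
    (hj : AEStronglyMeasurable (fun ω => B k' ω j) μ) :
    ∫ ω, B k ω i * B k' ω j ∂μ = (∫ ω, B k ω i ∂μ) * ∫ ω, B k' ω j ∂μ :=
  ((hindep.indepFun hk).comp (measurable_pi_apply i)
    (measurable_pi_apply j)).integral_fun_mul_eq_mul_integral hi hj

section SplicedBlocks

variable {Ω : Type*} {Ms : ℕ} {B : ℕ → Ω → (Fin Ms → ℝ)} {E : ℕ → Ω → ℝ}

theorem spliced_eq_of_lt (hMs : 0 < Ms)
    (hE : ∀ n ω, E n ω = B (n / Ms) ω ⟨n % Ms, Nat.mod_lt n hMs⟩)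
    {n : ℕ} (hn : n < Ms) (ω : Ω) : E n ω = B 0 ω ⟨n, hn⟩ := by
  rw [hE]
  congr
  · exact Nat.div_eq_of_lt hn
  · exact Nat.mod_eq_of_lt hn

theorem integral_spliced_mul_shift [MeasureSpace Ω] {P ρ : ℝ} (hMs : 0 < Ms)
    (hE : ∀ n ω, E n ω = B (n / Ms) ω ⟨n % Ms, Nat.mod_lt n hMs⟩)
    (hindep : iIndepFun B ℙ)
    (hint : ∀ k (i : Fin Ms), Integrable (fun ω => B k ω i) ℙ)
    (hmean : ∀ k (i : Fin Ms), (∫ ω, B k ω i ∂ℙ) = P)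
    (hpair : ∀ k (i j : Fin Ms), i ≠ j → (∫ ω, B k ω i * B k ω j ∂ℙ) = ρ)
    {w τ : ℕ} (hw : w < Ms) (hτ : 0 < τ) :
    ∫ ω, E w ω * E (w + τ) ω ∂ℙ = if w + τ < Ms then ρ else P ^ 2 := by
  simp_rw [spliced_eq_of_lt hMs hE hw]
  split_ifs with hin
  · simp_rw [spliced_eq_of_lt hMs hE hin]
    exact hpair 0 _ _ (by simp only [ne_eq, Fin.mk.injEq]; omega)
  · have hblock : 0 ≠ (w + τ) / Ms := by
      have := (Nat.one_le_div_iff hMs).mpr (not_lt.mp hin)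
      omega
    simp_rw [hE (w + τ)]
    rw [hindep.integral_apply_mul_apply hblock _ _ (hint _ _).1 (hint _ _).1, hmean, hmean, sq]

end SplicedBlocks

theorem timeAvg_second_order_corr_general
    {Ω : Type*} [MeasureSpace Ω]
    (Ms : ℕ) (hMs : 0 < Ms) (P ρ : ℝ)
    (B : ℕ → Ω → (Fin Ms → ℝ))
    (hindep : iIndepFun B ℙ)
    (hint1 : ∀ k (i : Fin Ms), Integrable (fun ω => B k ω i) ℙ)
    (hmean : ∀ k (i : Fin Ms), (∫ ω, B k ω i ∂ℙ) = P)
    (hpair : ∀ k (i j : Fin Ms), i ≠ j → (∫ ω, B k ω i * B k ω j ∂ℙ) = ρ)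
    (E : ℕ → Ω → ℝ)
    (hE : ∀ n ω, E n ω = B (n / Ms) ω ⟨n % Ms, Nat.mod_lt n hMs⟩)
    (τ : ℕ) (hτ : 0 < τ) :
    (1 / (Ms : ℝ)) * ∑ w ∈ Finset.range Ms, ∫ ω, E w ω * E (w + τ) ω ∂ℙ
      = if τ < Ms then ((τ : ℝ) * P ^ 2 + ((Ms : ℝ) - (τ : ℝ)) * ρ) / (Ms : ℝ)
        else P ^ 2 := by
  have hMsR : (Ms : ℝ) ≠ 0 := Nat.cast_ne_zero.mpr hMs.ne'
  rw [sum_congr rfl fun w hw => integral_spliced_mul_shift hMs hE hindep hint1 hmean hpair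
    (mem_range.mp hw) hτ, sum_range_ite_add_lt, nsmul_eq_mul, nsmul_eq_mul]
  split_ifs with hτMs
  · rw [min_eq_left hτMs.le, Nat.cast_sub hτMs.le]
    field_simp
    ring
  · rw [min_eq_right (not_lt.mp hτMs), Nat.sub_eq_zero_of_le (not_lt.mp hτMs)]
    field_simp
    simp

/-- Theorem 6 (time-averaged second-order correlation of a block-i.i.d. energy
sequence): splicing i.i.d. shaped blocks of length `M_s` with per-position mean `P`
and off-diagonal intra-block correlation `ρ`, for every delay `τ > 0` the
time-averaged correlation equals `(τ·P² + (M_s − τ)·ρ)/M_s` if `τ < M_s`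
and `P²` if `τ ≥ M_s`. -/
theorem timeAvg_second_order_corr
    {Ω : Type*} [MeasureSpace Ω] [IsProbabilityMeasure (ℙ : Measure Ω)]
    (Ms : ℕ) (hMs : 0 < Ms) (P ρ : ℝ)
    (B : ℕ → Ω → (Fin Ms → ℝ))
    (hmeas : ∀ k, Measurable (B k))
    (hindep : iIndepFun B ℙ)
    (hident : ∀ k, IdentDistrib (B k) (B 0) ℙ ℙ)
    (hint1 : ∀ k (i : Fin Ms), Integrable (fun ω => B k ω i) ℙ)
    (hint2 : ∀ k k' (i j : Fin Ms), Integrable (fun ω => B k ω i * B k' ω j) ℙ)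
    (hint3 : ∀ k k' k'' (i j l : Fin Ms),
      Integrable (fun ω => B k ω i * B k' ω j * B k'' ω l) ℙ)
    (hmean : ∀ k (i : Fin Ms), (∫ ω, B k ω i ∂ℙ) = P)
    (hpair : ∀ k (i j : Fin Ms), i ≠ j → (∫ ω, B k ω i * B k ω j ∂ℙ) = ρ)
    (E : ℕ → Ω → ℝ)
    (hE : ∀ n ω, E n ω = B (n / Ms) ω ⟨n % Ms, Nat.mod_lt n hMs⟩)
    (τ : ℕ) (hτ : 0 < τ) :
    (1 / (Ms : ℝ)) * ∑ w ∈ Finset.range Ms, ∫ ω, E w ω * E (w + τ) ω ∂ℙ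
      = if τ < Ms then ((τ : ℝ) * P ^ 2 + ((Ms : ℝ) - (τ : ℝ)) * ρ) / (Ms : ℝ)
        else P ^ 2 :=
  timeAvg_second_order_corr_general Ms hMs P ρ B hindep hint1 hmean hpair E hE τ hτ
end

section
/- Theorem 7 (time-averaged triple correlation, both delays within one block): assume additionally that E[B_k i · B_k j · B_k l] = ρ₃ for all pairwise distinct i, j, l. Then with the spliced energy sequence E_n = B_{n / M_s} (n mod M_s), for all integer delays with 0 < τ < τ' < M_s, (1/M_s) · ∑_{w=0}^{M_s−1} E[E_w · E_{w+τ} · E_{w+τ'}] = (τ'·P·ρ + (M_s − τ')·ρ₃)/M_s. -/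
open MeasureTheory ProbabilityTheory

/-- Theorem 7 (time-averaged triple correlation, both delays within one block):
with per-position mean `P`, off-diagonal pair correlation `ρ` and off-diagonal triple
correlation `ρ₃`, splicing i.i.d. blocks of length `M_s`, for delays
`0 < τ < τ' < M_s` the time-averaged triple correlation equals
`(τ'·P·ρ + (M_s − τ')·ρ₃)/M_s`. -/
theorem timeAvg_triple_corr_within_block
    {Ω : Type*} [MeasureSpace Ω] [IsProbabilityMeasure (ℙ : Measure Ω)]
    (Ms : ℕ) (hMs : 0 < Ms) (P ρ ρ₃ : ℝ)
    (B : ℕ → Ω → (Fin Ms → ℝ))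
    (hmeas : ∀ k, Measurable (B k))
    (hindep : iIndepFun B ℙ)
    (hident : ∀ k, IdentDistrib (B k) (B 0) ℙ ℙ)
    (hint1 : ∀ k (i : Fin Ms), Integrable (fun ω => B k ω i) ℙ)
    (hint2 : ∀ k k' (i j : Fin Ms), Integrable (fun ω => B k ω i * B k' ω j) ℙ)
    (hint3 : ∀ k k' k'' (i j l : Fin Ms),
      Integrable (fun ω => B k ω i * B k' ω j * B k'' ω l) ℙ)
    (hmean : ∀ k (i : Fin Ms), (∫ ω, B k ω i ∂ℙ) = P)
    (hpair : ∀ k (i j : Fin Ms), i ≠ j → (∫ ω, B k ω i * B k ω j ∂ℙ) = ρ)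
    (htriple : ∀ k (i j l : Fin Ms), i ≠ j → i ≠ l → j ≠ l →
      (∫ ω, B k ω i * B k ω j * B k ω l ∂ℙ) = ρ₃)
    (E : ℕ → Ω → ℝ)
    (hE : ∀ n ω, E n ω = B (n / Ms) ω ⟨n % Ms, Nat.mod_lt n hMs⟩)
    (τ τ' : ℕ) (hτ : 0 < τ) (hττ' : τ < τ') (hτ' : τ' < Ms) :
    (1 / (Ms : ℝ)) * ∑ w ∈ Finset.range Ms, ∫ ω, E w ω * E (w + τ) ω * E (w + τ') ω ∂ℙ
      = ((τ' : ℝ) * P * ρ + ((Ms : ℝ) - (τ' : ℝ)) * ρ₃) / (Ms : ℝ) := by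
  have key12 : ∀ (k k' : ℕ), k ≠ k' → ∀ (i j l : Fin Ms),
      (∫ ω, B k ω i * B k ω j * B k' ω l ∂ℙ)
        = (∫ ω, B k ω i * B k ω j ∂ℙ) * (∫ ω, B k' ω l ∂ℙ) := by
    intro k k' hkk' i j l
    have h : IndepFun (fun ω => B k ω i * B k ω j) (fun ω => B k' ω l) ℙ :=
      (hindep.indepFun hkk').comp
        ((measurable_pi_apply i).mul (measurable_pi_apply j)) (measurable_pi_apply l)
    exact h.integral_fun_mul_eq_mul_integral (hint2 k k i j).aestronglyMeasurable (hint1 k' l).aestronglyMeasurable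
  have key1_23 : ∀ (k k' : ℕ), k ≠ k' → ∀ (i j l : Fin Ms),
      (∫ ω, B k ω i * (B k' ω j * B k' ω l) ∂ℙ)
        = (∫ ω, B k ω i ∂ℙ) * (∫ ω, B k' ω j * B k' ω l ∂ℙ) := by
    intro k k' hkk' i j l
    have h : IndepFun (fun ω => B k ω i) (fun ω => B k' ω j * B k' ω l) ℙ :=
      (hindep.indepFun hkk').comp (measurable_pi_apply i)
        ((measurable_pi_apply j).mul (measurable_pi_apply l))
    exact h.integral_fun_mul_eq_mul_integral (hint1 k i).aestronglyMeasurable (hint2 k' k' j l).aestronglyMeasurable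
  have hval : ∀ w ∈ Finset.range Ms,
      (∫ ω, E w ω * E (w + τ) ω * E (w + τ') ω ∂ℙ)
        = if w + τ' < Ms then ρ₃ else P * ρ := by
    intro w hw
    simp only [Finset.mem_range] at hw
    have hd0 : w / Ms = 0 := Nat.div_eq_of_lt hw
    have hm0 : w % Ms = w := Nat.mod_eq_of_lt hw
    by_cases hA : w + τ' < Ms
    · have hd1 : (w + τ) / Ms = 0 := Nat.div_eq_of_lt (by omega)
      have hd2 : (w + τ') / Ms = 0 := Nat.div_eq_of_lt hA
      have hm1 : (w + τ) % Ms = w + τ := Nat.mod_eq_of_lt (by omega)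
      have hm2 : (w + τ') % Ms = w + τ' := Nat.mod_eq_of_lt hA
      simp only [hE, hd0, hd1, hd2, if_pos hA]
      exact htriple 0 _ _ _
        (by simp [Fin.ext_iff, hm0, hm1]; omega)
        (by simp [Fin.ext_iff, hm0, hm2]; omega)
        (by simp [Fin.ext_iff, hm1, hm2]; omega)
    · rw [if_neg hA]
      by_cases hB : w + τ < Ms
      · -- first two in block 0, third in block 1
        have hd1 : (w + τ) / Ms = 0 := Nat.div_eq_of_lt hB
        have hd2 : (w + τ') / Ms = 1 := Nat.div_eq_of_lt_le (by omega) (by omega)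
        have hm1 : (w + τ) % Ms = w + τ := Nat.mod_eq_of_lt hB
        simp only [hE, hd0, hd1, hd2]
        rw [key12 0 1 (by omega) _ _ _,
          hpair 0 _ _ (by simp [Fin.ext_iff, hm0, hm1]; omega), hmean]
        ring
      · -- first in block 0, last two in block 1
        have hd1 : (w + τ) / Ms = 1 := Nat.div_eq_of_lt_le (by omega) (by omega)
        have hd2 : (w + τ') / Ms = 1 := Nat.div_eq_of_lt_le (by omega) (by omega)
        have hm1 : (w + τ) % Ms = w + τ - Ms := by
          rw [Nat.mod_eq_sub_mod (by omega)]; exact Nat.mod_eq_of_lt (by omega)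
        have hm2 : (w + τ') % Ms = w + τ' - Ms := by
          rw [Nat.mod_eq_sub_mod (by omega)]; exact Nat.mod_eq_of_lt (by omega)
        simp only [hE, hd0, hd1, hd2, mul_assoc]
        rw [key1_23 0 1 (by omega) _ _ _, hmean,
          hpair 1 _ _ (by simp [Fin.ext_iff, hm1, hm2]; omega)]
  rw [Finset.sum_congr rfl hval, Finset.sum_ite, Finset.sum_const, Finset.sum_const]
  have h1 : Finset.filter (fun w => w + τ' < Ms) (Finset.range Ms)
      = Finset.range (Ms - τ') := by
    ext x; simp [Finset.mem_filter, Finset.mem_range]; omega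
  have h2 : Finset.filter (fun w => ¬ w + τ' < Ms) (Finset.range Ms)
      = Finset.Ico (Ms - τ') Ms := by
    ext x; simp [Finset.mem_filter, Finset.mem_range]; omega
  rw [h1, h2, Finset.card_range, Nat.card_Ico]
  have hMsτ' : (Ms - τ' : ℕ) = (Ms : ℝ) - (τ' : ℝ) := by
    push_cast [Nat.cast_sub hτ'.le]; ring
  have hMsτ'' : (Ms - (Ms - τ') : ℕ) = (τ' : ℝ) := by
    push_cast [Nat.cast_sub (by omega : Ms - τ' ≤ Ms), Nat.cast_sub hτ'.le]; ring
  rw [nsmul_eq_mul, nsmul_eq_mul, hMsτ', hMsτ'']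
  have : (Ms : ℝ) ≠ 0 := Nat.cast_ne_zero.mpr hMs.ne'
  field_simp
  ring
end
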